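/- arXiv:2206.05087 — 15 statements merged into one kernel-verified Lean document; each statement's English description precedes it below -/
import Mathlib

section
/- Consider a heterogeneous game Γ(n,T,x,y,z) with y < 0 and z < 0 (coordination game). For a ∈ [0,1], the constant strategy α* with α*_t = a for all t ∈ T is a symmetric Nash equilibrium if and only if a = 0, a = 1, or a = ζ. -/
open Finset

noncomputable def U {T : Type*} [Fintype T] (n : ℕ) (x : T → ℝ) (y z : ℝ)
    (α β : T → ℝ) : ℝ :=
  z * ∑ j, x j * β j +
    ∑ j, (x j / ((n : ℝ) - 1)) *
      (((n : ℝ) - 1) * y + (y + z) * β j - (n : ℝ) * (y + z) * ∑ i, x i * β i) * α j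

def IsStrategy {T : Type*} (α : T → ℝ) : Prop :=
  ∀ t, α t ∈ Set.Icc (0 : ℝ) 1

def IsSymNash {T : Type*} [Fintype T] (n : ℕ) (x : T → ℝ) (y z : ℝ)
    (α : T → ℝ) : Prop :=
  IsStrategy α ∧ ∀ β : T → ℝ, IsStrategy β → U n x y z β α ≤ U n x y z α α

/-! Against the constant profile `a`, a player's payoff is affine in the aggregate cooperation
rate `s = ∑ x_j β_j ∈ [0,1]`, with slope `c = y - (y + z) a`. Hence `a` is an equilibrium iff `a`
maximises `s ↦ c s` on `[0,1]`: `a = 0` with `c < 0`, `a = 1` with `c > 0`, or `c = 0`, i.e.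
`a = ζ`. For `y, z < 0` the slope is `y < 0` at `a = 0` and `-z > 0` at `a = 1`, and `ζ ∈ [0,1]`. -/

section

variable {T : Type*} [Fintype T] {n : ℕ} {x : T → ℝ} {y z : ℝ}

lemma sum_mul_const_of_sum_eq_one (hx : ∑ t, x t = 1) (a : ℝ) : ∑ t, x t * a = a := by
  rw [← Finset.sum_mul, hx, one_mul]

lemma sum_mul_mem_Icc_of_isStrategy (hx0 : ∀ t, 0 ≤ x t) (hx : ∑ t, x t = 1) {β : T → ℝ}
    (hβ : IsStrategy β) : ∑ t, x t * β t ∈ Set.Icc (0 : ℝ) 1 := by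
  refine ⟨sum_nonneg fun t _ => mul_nonneg (hx0 t) (hβ t).1, ?_⟩
  calc ∑ t, x t * β t ≤ ∑ t, x t * 1 :=
        sum_le_sum fun t _ => mul_le_mul_of_nonneg_left (hβ t).2 (hx0 t)
    _ = 1 := sum_mul_const_of_sum_eq_one hx 1

lemma U_const_right (hx : ∑ t, x t = 1) (hn : (n : ℝ) ≠ 1) (β : T → ℝ) (a : ℝ) :
    U n x y z β (fun _ => a) = z * a + (y - (y + z) * a) * ∑ t, x t * β t := by
  have hn' : (n : ℝ) - 1 ≠ 0 := sub_ne_zero.mpr hn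
  simp only [U, sum_mul_const_of_sum_eq_one hx, Finset.mul_sum]
  congr 1
  refine sum_congr rfl fun t _ => ?_
  field_simp
  ring

lemma isSymNash_const_iff [Nonempty T] (hx0 : ∀ t, 0 ≤ x t) (hx : ∑ t, x t = 1)
    (hn : (n : ℝ) ≠ 1) (a : ℝ) :
    IsSymNash n x y z (fun _ : T => a) ↔
      a ∈ Set.Icc (0 : ℝ) 1 ∧ IsMaxOn (fun s => (y - (y + z) * a) * s) (Set.Icc 0 1) a := by
  have hα : IsStrategy (fun _ : T => a) ↔ a ∈ Set.Icc (0 : ℝ) 1 :=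
    ⟨fun h => h (Classical.arbitrary T), fun h _ => h⟩
  simp only [IsSymNash, hα, U_const_right hx hn, sum_mul_const_of_sum_eq_one hx, isMaxOn_iff,
    add_le_add_iff_left]
  refine and_congr_right fun _ => ⟨fun h s hs => ?_, fun h β hβ => ?_⟩
  · simpa only [sum_mul_const_of_sum_eq_one hx] using h (fun _ => s) fun _ => hs
  · exact h _ (sum_mul_mem_Icc_of_isStrategy hx0 hx hβ)

end

lemma isMaxOn_mul_Icc_iff {c a : ℝ} (ha : a ∈ Set.Icc (0 : ℝ) 1) :
    IsMaxOn (fun s => c * s) (Set.Icc 0 1) a ↔ c = 0 ∨ (c < 0 ∧ a = 0) ∨ (0 < c ∧ a = 1) := by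
  rw [isMaxOn_iff]
  constructor
  · intro h
    rcases lt_trichotomy c 0 with hc | hc | hc
    · have := h 0 ⟨le_rfl, zero_le_one⟩
      exact Or.inr (Or.inl ⟨hc, by nlinarith [ha.1]⟩)
    · exact Or.inl hc
    · have := h 1 ⟨zero_le_one, le_rfl⟩
      exact Or.inr (Or.inr ⟨hc, by nlinarith [ha.2]⟩)
  · rintro (rfl | ⟨hc, rfl⟩ | ⟨hc, rfl⟩) s hs
    · simp
    · nlinarith [hs.1]
    · nlinarith [hs.2]

theorem stmt2_general {T : Type*} [Fintype T]
    (n : ℕ) (x : T → ℝ) (hx : ∑ t, x t = 1)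
    (hxt : ∀ t : T, 1 < (n : ℝ) * x t ∧ (n : ℝ) * x t < n)
    (y z : ℝ) (hy : y < 0) (hz : z < 0) (a : ℝ) :
    IsSymNash n x y z (fun _ : T => a) ↔ (a = 0 ∨ a = 1 ∨ a = y / (y + z)) := by
  have : Nonempty T := by
    by_contra h
    simp [not_nonempty_iff.mp h] at hx
  have hn : (1 : ℝ) < n := (hxt (Classical.arbitrary T)).1.trans (hxt _).2
  have hx0 : ∀ t, 0 ≤ x t := fun t => by nlinarith [(hxt t).1]
  have hyz : y + z < 0 := by linarith
  rw [isSymNash_const_iff hx0 hx hn.ne']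
  constructor
  · rintro ⟨ha, hc⟩
    rcases (isMaxOn_mul_Icc_iff ha).mp hc with hc | ⟨-, rfl⟩ | ⟨-, rfl⟩
    · exact Or.inr (Or.inr (by rw [eq_div_iff hyz.ne]; linarith))
    · exact Or.inl rfl
    · exact Or.inr (Or.inl rfl)
  · have hζ : y / (y + z) ∈ Set.Icc (0 : ℝ) 1 :=
      ⟨div_nonneg_of_nonpos hy.le hyz.le, (div_le_one_of_neg hyz).mpr (by linarith)⟩
    rintro (rfl | rfl | rfl)
    · exact ⟨⟨le_rfl, zero_le_one⟩, (isMaxOn_mul_Icc_iff ⟨le_rfl, zero_le_one⟩).mpr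
        (Or.inr (Or.inl ⟨by linarith, rfl⟩))⟩
    · exact ⟨⟨zero_le_one, le_rfl⟩, (isMaxOn_mul_Icc_iff ⟨zero_le_one, le_rfl⟩).mpr
        (Or.inr (Or.inr ⟨by linarith, rfl⟩))⟩
    · refine ⟨hζ, (isMaxOn_mul_Icc_iff hζ).mpr (Or.inl ?_)⟩
      field_simp [hyz.ne]
      ring

theorem stmt2 {T : Type*} [Fintype T] (hT : 2 ≤ Fintype.card T)
    (n : ℕ) (x : T → ℝ) (hx : ∑ t, x t = 1)
    (hxt : ∀ t : T, 1 < (n : ℝ) * x t ∧ (n : ℝ) * x t < n)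
    (y z : ℝ) (hy : y < 0) (hz : z < 0) (a : ℝ) (ha : a ∈ Set.Icc (0 : ℝ) 1) :
    IsSymNash n x y z (fun _ : T => a) ↔ (a = 0 ∨ a = 1 ∨ a = y / (y + z)) :=
  stmt2_general n x hx hxt y z hy hz a
end

section
/- Consider a heterogeneous game Γ(n,T,x,y,z) with y + z ≠ 0. If α* is a symmetric Nash equilibrium and i, j ∈ T satisfy 0 < α*_i < 1 and 0 < α*_j < 1, then α*_i = α*_j. -/
open Finset

/-! The payoff `U β α` is affine in the player's own strategy `β`, so against a fixed `α` the
best replies maximise a linear functional over the cube `[0,1]^T`. At an equilibrium every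
interior coordinate of `α` must therefore have zero coefficient in that functional. Stripped of
their positive weights `x t / (n - 1)`, the coefficients of types `i` and `j` differ by
`(y + z) (α i - α j)`. -/

theorem IsStrategy.update {T : Type*} [DecidableEq T] {α : T → ℝ} (hα : IsStrategy α) (t : T)
    {v : ℝ} (hv : v ∈ Set.Icc (0 : ℝ) 1) : IsStrategy (Function.update α t v) :=
  Function.forall_update_iff α (p := fun _ w => w ∈ Set.Icc (0 : ℝ) 1) |>.mpr
    ⟨hv, fun s _ => hα s⟩

section Strategy

variable {T : Type*} [Fintype T]

theorem sum_mul_update [DecidableEq T] (c α : T → ℝ) (t : T) (v : ℝ) :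
    ∑ s, c s * Function.update α t v s = ∑ s, c s * α s + c t * (v - α t) := by
  rw [Fintype.sum_eq_add_sum_compl t, Fintype.sum_eq_add_sum_compl t (fun s => c s * α s),
    Function.update_self]
  have hrest : ∑ s ∈ {t}ᶜ, c s * Function.update α t v s = ∑ s ∈ {t}ᶜ, c s * α s :=
    Finset.sum_congr rfl fun s hs => by
      rw [Function.update_of_ne (by simpa using hs)]
  rw [hrest]
  ring

theorem eq_zero_of_isMaxOn_sum_mul {c α : T → ℝ}
    (hmax : IsMaxOn (fun β => ∑ s, c s * β s) {β | IsStrategy β} α) (hα : IsStrategy α)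
    {t : T} (ht0 : 0 < α t) (ht1 : α t < 1) : c t = 0 := by
  classical
  have hdev : ∀ v ∈ Set.Icc (0 : ℝ) 1, c t * (v - α t) ≤ 0 := fun v hv => by
    have : ∑ s, c s * Function.update α t v s ≤ ∑ s, c s * α s := hmax (hα.update t hv)
    rw [sum_mul_update] at this
    linarith
  have hdown : 0 ≤ c t := by
    have := hdev 0 ⟨le_rfl, zero_le_one⟩
    nlinarith
  have hup : c t ≤ 0 := by
    have := hdev 1 ⟨zero_le_one, le_rfl⟩
    nlinarith
  exact le_antisymm hup hdown

end Strategy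

section Game

variable {T : Type*} [Fintype T] (n : ℕ) (x : T → ℝ) (y z : ℝ)

noncomputable def marginalPayoff (α : T → ℝ) (t : T) : ℝ :=
  x t / ((n : ℝ) - 1) *
    (((n : ℝ) - 1) * y + (y + z) * α t - (n : ℝ) * (y + z) * ∑ i, x i * α i)

theorem U_eq_add_sum_marginalPayoff (α β : T → ℝ) :
    U n x y z β α = z * ∑ j, x j * α j + ∑ j, marginalPayoff n x y z α j * β j :=
  rfl

variable {n x y z}

theorem IsSymNash.marginalPayoff_eq_zero {α : T → ℝ} (hNE : IsSymNash n x y z α) {t : T}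
    (ht0 : 0 < α t) (ht1 : α t < 1) : marginalPayoff n x y z α t = 0 := by
  refine eq_zero_of_isMaxOn_sum_mul (fun β hβ => ?_) hNE.1 ht0 ht1
  exact (add_le_add_iff_left _).mp (hNE.2 β hβ)

end Game

theorem stmt4_general {T : Type*} [Fintype T]
    (n : ℕ) (x : T → ℝ)
    (hxt : ∀ t : T, 1 < (n : ℝ) * x t ∧ (n : ℝ) * x t < n)
    (y z : ℝ) (hyz : y + z ≠ 0) (α : T → ℝ) (hNE : IsSymNash n x y z α)
    (i j : T) (hi0 : 0 < α i) (hi1 : α i < 1) (hj0 : 0 < α j) (hj1 : α j < 1) :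
    α i = α j := by
  have hn : (0 : ℝ) < n - 1 := by linarith [(hxt i).1, (hxt i).2]
  have hweight : ∀ t, x t / ((n : ℝ) - 1) ≠ 0 := fun t =>
    (div_pos (pos_of_mul_pos_right ((hxt t).1.trans' one_pos) n.cast_nonneg) hn).ne'
  have hi := hNE.marginalPayoff_eq_zero hi0 hi1
  have hj := hNE.marginalPayoff_eq_zero hj0 hj1
  rw [marginalPayoff, mul_eq_zero, or_iff_right (hweight i)] at hi
  rw [marginalPayoff, mul_eq_zero, or_iff_right (hweight j)] at hj
  have hdiff : (y + z) * (α i - α j) = 0 := by linarith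
  exact sub_eq_zero.mp ((mul_eq_zero.mp hdiff).resolve_left hyz)

theorem stmt4 {T : Type*} [Fintype T] (hT : 2 ≤ Fintype.card T)
    (n : ℕ) (x : T → ℝ) (hx : ∑ t, x t = 1)
    (hxt : ∀ t : T, 1 < (n : ℝ) * x t ∧ (n : ℝ) * x t < n)
    (y z : ℝ) (hyz : y + z ≠ 0) (α : T → ℝ) (hNE : IsSymNash n x y z α)
    (i j : T) (hi0 : 0 < α i) (hi1 : α i < 1) (hj0 : 0 < α j) (hj1 : α j < 1) :
    α i = α j :=
  stmt4_general n x hxt y z hyz α hNE i j hi0 hi1 hj0 hj1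
end

section
/- Consider a heterogeneous game Γ(n,T,x,y,z) with y + z ≠ 0. If α* is a symmetric Nash equilibrium, then there exists c ∈ (0,1) such that α*_t ∈ {0, 1, c} for every t ∈ T; in particular, α* takes at most three distinct values. -/
open Finset

theorem stmt5 {T : Type*} [Fintype T] (hT : 2 ≤ Fintype.card T)
    (n : ℕ) (x : T → ℝ) (hx : ∑ t, x t = 1)
    (hxt : ∀ t : T, 1 < (n : ℝ) * x t ∧ (n : ℝ) * x t < n)
    (y z : ℝ) (hyz : y + z ≠ 0) (α : T → ℝ) (hNE : IsSymNash n x y z α) :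
    ∃ c : ℝ, 0 < c ∧ c < 1 ∧ ∀ t : T, α t = 0 ∨ α t = 1 ∨ α t = c := by
  classical
  obtain ⟨hstrat, hnash⟩ := hNE
  have hT' : Nonempty T := Fintype.card_pos_iff.mp (by omega)
  obtain ⟨t0⟩ := hT'
  have hn1 : (1 : ℝ) < n := lt_trans (hxt t0).1 (hxt t0).2
  set S : ℝ := ∑ i, x i * α i with hS
  set w : T → ℝ := fun j =>
    (x j / ((n : ℝ) - 1)) * (((n : ℝ) - 1) * y + (y + z) * α j - (n : ℝ) * (y + z) * S)
    with hw
  have hU : ∀ β : T → ℝ, U n x y z β α = z * S + ∑ j, w j * β j := by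
    intro β
    simp only [U, hw, hS]
  have key : ∀ t : T, ∀ v ∈ Set.Icc (0 : ℝ) 1, w t * (v - α t) ≤ 0 := by
    intro t v hv
    have hβ : IsStrategy (Function.update α t v) := by
      intro s
      rcases eq_or_ne s t with rfl | h
      · simpa using hv
      · rw [Function.update_of_ne h]; exact hstrat s
    have hle := hnash _ hβ
    rw [hU, hU] at hle
    have hsum : ∑ j, w j * (Function.update α t v j - α j) = w t * (v - α t) := by
      rw [Finset.sum_eq_single t]
      · simp
      · intro b _ hb; rw [Function.update_of_ne hb]; ring
      · intro h; exact absurd (Finset.mem_univ t) h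
    have hsplit : ∑ j, w j * (Function.update α t v j - α j)
        = (∑ j, w j * Function.update α t v j) - ∑ j, w j * α j := by
      rw [← Finset.sum_sub_distrib]
      exact Finset.sum_congr rfl fun j _ => by ring
    rw [hsplit] at hsum
    linarith
  have hzero : ∀ t : T, 0 < α t → α t < 1 →
      (y + z) * α t = (n : ℝ) * (y + z) * S - ((n : ℝ) - 1) * y := by
    intro t h0 h1
    have h₁ := key t 0 ⟨le_refl 0, by norm_num⟩
    have h₂ := key t 1 ⟨by norm_num, le_refl 1⟩
    have hge : 0 ≤ w t := by
      by_contra h; push_neg at h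
      exact absurd h₁ (not_le.mpr (mul_pos_of_neg_of_neg h (by linarith)))
    have hle' : w t ≤ 0 := by
      by_contra h; push_neg at h
      exact absurd h₂ (not_le.mpr (mul_pos h (by linarith)))
    have hw0 : w t = 0 := le_antisymm hle' hge
    have hxpos : 0 < x t := by nlinarith [(hxt t).1]
    have hcoef : x t / ((n : ℝ) - 1) ≠ 0 := by
      apply div_ne_zero hxpos.ne'
      intro h; linarith
    have hE : ((n : ℝ) - 1) * y + (y + z) * α t - (n : ℝ) * (y + z) * S = 0 := by
      rcases mul_eq_zero.mp hw0 with h | h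
      · exact absurd h hcoef
      · exact h
    linarith
  by_cases hex : ∃ t : T, 0 < α t ∧ α t < 1
  · obtain ⟨t, h0, h1⟩ := hex
    refine ⟨α t, h0, h1, fun s => ?_⟩
    rcases (hstrat s).1.lt_or_eq with hs0 | hs0
    · rcases (hstrat s).2.lt_or_eq with hs1 | hs1
      · right; right
        have h1' := hzero s hs0 hs1
        have h2' := hzero t h0 h1
        have : (y + z) * α s = (y + z) * α t := by linarith
        exact mul_left_cancel₀ hyz this
      · right; left; exact hs1
    · left; exact hs0.symm
  · push_neg at hex
    refine ⟨1 / 2, by norm_num, by norm_num, fun s => ?_⟩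
    rcases (hstrat s).1.lt_or_eq with hs0 | hs0
    · right; left
      exact le_antisymm (hstrat s).2 (hex s hs0)
    · left; exact hs0.symm
end

section
/- Consider a heterogeneous game Γ(n,T,x,y,z) with y + z ≠ 0 and with more than three types, i.e. |T| ≥ 4. Then there is no totally discriminating symmetric Nash equilibrium: no symmetric Nash equilibrium α* satisfies α*_s ≠ α*_t for all s ≠ t in T. -/
open Finset

theorem stmt6 {T : Type*} [Fintype T] (hT : 2 ≤ Fintype.card T)
    (n : ℕ) (x : T → ℝ) (hx : ∑ t, x t = 1)
    (hxt : ∀ t : T, 1 < (n : ℝ) * x t ∧ (n : ℝ) * x t < n)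
    (hT4 : 4 ≤ Fintype.card T)
    (y z : ℝ) (hyz : y + z ≠ 0) (α : T → ℝ) (hNE : IsSymNash n x y z α) :
    ¬ (∀ s t : T, s ≠ t → α s ≠ α t) := by
  classical
  intro hdist
  obtain ⟨hα, hmax⟩ := hNE
  obtain ⟨t0⟩ : Nonempty T := Fintype.card_pos_iff.mp (by omega)
  have hn1 : (1:ℝ) < n := (hxt t0).1.trans (hxt t0).2
  have hn : (0:ℝ) < (n:ℝ) - 1 := by linarith
  have hxpos : ∀ t, 0 < x t := by
    intro t
    by_contra h
    push_neg at h
    have := (hxt t).1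
    nlinarith [mul_nonpos_of_nonneg_of_nonpos (Nat.cast_nonneg (α := ℝ) n) h]
  set S := ∑ i, x i * α i with hS
  set c : T → ℝ := fun j => (x j / ((n:ℝ)-1)) *
      (((n:ℝ)-1)*y + (y+z)*α j - (n:ℝ)*(y+z)*S) with hc
  have expand : ∀ β : T → ℝ, U n x y z β α = z * S + ∑ i, c i * β i := by
    intro β
    simp only [U, hc, hS]
  have key : ∀ j, ∀ v ∈ Set.Icc (0:ℝ) 1, c j * (v - α j) ≤ 0 := by
    intro j v hv
    have hstrat : IsStrategy (Function.update α j v) := by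
      intro t
      rcases eq_or_ne t j with rfl | h
      · simpa using hv
      · simpa [Function.update_of_ne h] using hα t
    have hle := hmax _ hstrat
    rw [expand, expand] at hle
    have h2 : (∑ i, (c i * Function.update α j v i - c i * α i)) = c j * (v - α j) := by
      rw [Finset.sum_eq_single j]
      · simp only [Function.update_self]
        ring
      · intro b _ hb
        simp [Function.update_of_ne hb]
      · intro h
        exact absurd (Finset.mem_univ j) h
    rw [Finset.sum_sub_distrib] at h2
    linarith
  have hKzero : ∀ j, 0 < α j → α j < 1 →
      ((n:ℝ)-1)*y + (y+z)*α j - (n:ℝ)*(y+z)*S = 0 := by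
    intro j hj0 hj1
    have k0 := key j 0 (by constructor <;> norm_num)
    have k1 := key j 1 (by constructor <;> norm_num)
    have hcge : 0 ≤ c j := by nlinarith
    have hcle : c j ≤ 0 := by nlinarith
    have hcz : c j = 0 := le_antisymm hcle hcge
    have hne : x j / ((n:ℝ)-1) ≠ 0 := div_ne_zero (ne_of_gt (hxpos j)) (ne_of_gt hn)
    rcases mul_eq_zero.mp hcz with h | h
    · exact absurd h hne
    · exact h
  set const : ℝ := ((n:ℝ)*(y+z)*S - ((n:ℝ)-1)*y)/(y+z) with hconst
  have himg : ∀ t, α t ∈ ({0, 1, const} : Finset ℝ) := by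
    intro t
    rcases eq_or_ne (α t) 0 with h0 | h0
    · simp [h0]
    rcases eq_or_ne (α t) 1 with h1 | h1
    · simp [h1]
    have ht := hα t
    have hK := hKzero t (lt_of_le_of_ne ht.1 (Ne.symm h0)) (lt_of_le_of_ne ht.2 h1)
    have : α t = const := by
      rw [hconst]
      field_simp
      linarith [hK]
    simp [this]
  have hinj : Function.Injective α := by
    intro s t h
    by_contra hne
    exact hdist s t hne h
  have hcard : (Finset.univ.image α).card = Fintype.card T := by
    rw [Finset.card_image_of_injective _ hinj, Finset.card_univ]
  have hsub : Finset.univ.image α ⊆ ({0, 1, const} : Finset ℝ) := by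
    intro a ha
    obtain ⟨t, _, rfl⟩ := Finset.mem_image.mp ha
    exact himg t
  have hle3 := Finset.card_le_card hsub
  have a1 := Finset.card_insert_le (0:ℝ) ({1, const} : Finset ℝ)
  have a2 := Finset.card_insert_le (1:ℝ) ({const} : Finset ℝ)
  have a3 : ({const} : Finset ℝ).card = 1 := Finset.card_singleton _
  omega
end

section
/- Consider a heterogeneous game Γ(n,T,x,y,z) with y < 0 and z < 0 (coordination game). Then there is no discriminating symmetric Nash equilibrium: every symmetric Nash equilibrium α* is constant, i.e. α*_i = α*_j for all i, j ∈ T. -/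
open Finset

lemma Udiff {T : Type*} [Fintype T] [DecidableEq T] (n : ℕ) (x : T → ℝ) (y z : ℝ)
    (α : T → ℝ) (t : T) (v : ℝ) :
    U n x y z (Function.update α t v) α - U n x y z α α
      = (x t / ((n : ℝ) - 1)) *
        (((n : ℝ) - 1) * y + (y + z) * α t - (n : ℝ) * (y + z) * ∑ i, x i * α i)
        * (v - α t) := by
  unfold U
  have hcancel : ∀ a b c : ℝ, (a + b) - (a + c) = b - c := fun _ _ _ => by ring
  rw [hcancel, ← Finset.sum_sub_distrib, Finset.sum_eq_single t]
  · rw [Function.update_self]; ring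
  · intro b _ hb
    rw [Function.update_of_ne hb]; ring
  · intro h; exact absurd (Finset.mem_univ t) h

theorem stmt7 {T : Type*} [Fintype T] (hT : 2 ≤ Fintype.card T)
    (n : ℕ) (x : T → ℝ) (hx : ∑ t, x t = 1)
    (hxt : ∀ t : T, 1 < (n : ℝ) * x t ∧ (n : ℝ) * x t < n)
    (y z : ℝ) (hy : y < 0) (hz : z < 0) (α : T → ℝ) (hNE : IsSymNash n x y z α) :
    ∀ i j : T, α i = α j := by
  classical
  obtain ⟨hαs, hNash⟩ := hNE
  have hne : Nonempty T := Fintype.card_pos_iff.mp (by omega)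
  obtain ⟨t0⟩ := hne
  have hN1 : (1 : ℝ) < (n : ℝ) := lt_trans (hxt t0).1 (hxt t0).2
  have hNpos : (0 : ℝ) < (n : ℝ) - 1 := by linarith
  have hxpos : ∀ t, 0 < x t := by
    intro t
    by_contra h
    push_neg at h
    have : (n : ℝ) * x t ≤ 0 := mul_nonpos_of_nonneg_of_nonpos (by linarith) h
    linarith [(hxt t).1]
  set S : ℝ := ∑ i, x i * α i with hSdef
  -- the "marginal payoff" f t
  set f : T → ℝ := fun t => ((n : ℝ) - 1) * y + (y + z) * α t - (n : ℝ) * (y + z) * S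
    with hfdef
  have hupdstrat : ∀ (t : T) (v : ℝ), v ∈ Set.Icc (0:ℝ) 1 →
      IsStrategy (Function.update α t v) := by
    intro t v hv s
    by_cases h : s = t
    · subst h; simpa using hv
    · rw [Function.update_of_ne h]; exact hαs s
  have hd : ∀ (t : T) (v : ℝ),
      U n x y z (Function.update α t v) α - U n x y z α α
        = (x t / ((n : ℝ) - 1)) * f t * (v - α t) := by
    intro t v
    rw [Udiff n x y z α t v, hfdef, hSdef]
  -- key: f t > 0 → α t = 1
  have key1 : ∀ t, 0 < f t → α t = 1 := by
    intro t hft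
    have h1 := hNash _ (hupdstrat t 1 ⟨zero_le_one, le_refl 1⟩)
    have hdt := hd t 1
    have hgt : 0 < (x t / ((n : ℝ) - 1)) * f t :=
      mul_pos (div_pos (hxpos t) hNpos) hft
    refine le_antisymm (hαs t).2 ?_
    by_contra h
    push_neg at h
    have : 0 < (x t / ((n : ℝ) - 1)) * f t * (1 - α t) :=
      mul_pos hgt (by linarith)
    linarith
  -- key: f t < 0 → α t = 0
  have key2 : ∀ t, f t < 0 → α t = 0 := by
    intro t hft
    have h1 := hNash _ (hupdstrat t 0 ⟨le_refl 0, zero_le_one⟩)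
    have hdt := hd t 0
    have hgt : (x t / ((n : ℝ) - 1)) * f t < 0 :=
      mul_neg_of_pos_of_neg (div_pos (hxpos t) hNpos) hft
    refine le_antisymm ?_ (hαs t).1
    by_contra h
    push_neg at h
    have : 0 < (x t / ((n : ℝ) - 1)) * f t * (0 - α t) :=
      mul_pos_of_neg_of_neg hgt (by linarith)
    linarith
  -- no strict inequality possible
  have main : ∀ i j : T, α i < α j → False := by
    intro i j hij
    have hyz : y + z < 0 := by linarith
    have hfij : f j < f i := by
      simp only [hfdef]
      nlinarith
    rcases le_or_gt (f i) 0 with h | h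
    · have hfj : f j < 0 := lt_of_lt_of_le hfij h
      have hαj := key2 j hfj
      have := (hαs i).1
      linarith
    · have hαi := key1 i h
      have := (hαs j).2
      linarith
  intro i j
  rcases lt_trichotomy (α i) (α j) with h | h | h
  · exact absurd h (fun h => main i j h)
  · exact h
  · exact absurd h (fun h => main j i h)
end

section
/- Consider a heterogeneous game Γ(n,T,x,y,z) with y + z < 0. Then every symmetric Nash equilibrium α* is constant on T; equivalently, the existence of a symmetric Nash equilibrium α* with α*_i ≠ α*_j for some i, j ∈ T implies y + z > 0. -/
open Finset

theorem stmt8 {T : Type*} [Fintype T] (hT : 2 ≤ Fintype.card T)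
    (n : ℕ) (x : T → ℝ) (hx : ∑ t, x t = 1)
    (hxt : ∀ t : T, 1 < (n : ℝ) * x t ∧ (n : ℝ) * x t < n)
    (y z : ℝ) (hyz : y + z < 0) (α : T → ℝ) (hNE : IsSymNash n x y z α) :
    ∀ i j : T, α i = α j := by
  classical
  obtain ⟨hα, hmax⟩ := hNE
  -- population size bound : (card T : ℝ) < n
  have hcard : ((Fintype.card T : ℝ)) < (n : ℝ) := by
    have hne : (Finset.univ : Finset T).Nonempty :=
      Finset.univ_nonempty_iff.mpr (Fintype.card_pos_iff.mp (by omega))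
    have hlt : ∑ t : T, (1 : ℝ) < ∑ t : T, (n : ℝ) * x t :=
      Finset.sum_lt_sum_of_nonempty hne (fun t _ => (hxt t).1)
    have h1 : ∑ t : T, (n : ℝ) * x t = (n : ℝ) := by
      rw [← Finset.mul_sum, hx, mul_one]
    simpa [h1, Finset.card_univ] using hlt
  have hn2 : (2 : ℝ) < (n : ℝ) := by
    have : (2 : ℝ) ≤ (Fintype.card T : ℝ) := by exact_mod_cast hT
    linarith
  have hden : (0 : ℝ) < (n : ℝ) - 1 := by linarith
  have hxpos : ∀ t : T, 0 < x t := by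
    intro t
    nlinarith [(hxt t).1]
  -- coefficient of the deviator's action against type k
  set K : T → ℝ := fun k =>
    ((n : ℝ) - 1) * y + (y + z) * α k - (n : ℝ) * (y + z) * ∑ i, x i * α i with hK
  have hU : ∀ β : T → ℝ, U n x y z β α =
      z * ∑ i, x i * α i + ∑ k, (x k / ((n : ℝ) - 1)) * K k * β k := by
    intro β
    rfl
  -- Nash condition localized at one type
  have key : ∀ (j : T) (b : ℝ), b ∈ Set.Icc (0 : ℝ) 1 →
      (x j / ((n : ℝ) - 1)) * K j * (b - α j) ≤ 0 := by
    intro j b hb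
    have hβ : IsStrategy (Function.update α j b) := by
      intro t
      rcases eq_or_ne t j with rfl | h
      · simpa using hb
      · simpa [Function.update_of_ne h] using hα t
    have hle := hmax _ hβ
    rw [hU, hU] at hle
    have hsum : (∑ k, (x k / ((n : ℝ) - 1)) * K k * (Function.update α j b k))
        - (∑ k, (x k / ((n : ℝ) - 1)) * K k * α k)
        = (x j / ((n : ℝ) - 1)) * K j * (b - α j) := by
      rw [← Finset.sum_sub_distrib]
      rw [Finset.sum_eq_single j]
      · simp [mul_sub]
      · intro k _ hk
        simp [Function.update_of_ne hk]
      · simp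
    linarith
  have main : ∀ i j : T, α i < α j → False := by
    intro i j hij
    have hci : 0 < x i / ((n : ℝ) - 1) := div_pos (hxpos i) hden
    have hcj : 0 < x j / ((n : ℝ) - 1) := div_pos (hxpos j) hden
    have hKij : K j < K i := by
      have h := mul_lt_mul_of_neg_left hij hyz
      simp only [hK]
      linarith
    by_cases h : 0 < K i
    · have hpos : 0 < (x i / ((n : ℝ) - 1)) * K i := mul_pos hci h
      have h1 : α i < 1 := lt_of_lt_of_le hij (hα j).2
      have := key i 1 ⟨zero_le_one, le_refl 1⟩
      nlinarith
    · have hKj : K j < 0 := lt_of_lt_of_le hKij (not_lt.mp h)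
      have hneg : (x j / ((n : ℝ) - 1)) * K j < 0 := mul_neg_of_pos_of_neg hcj hKj
      have h0 : 0 < α j := lt_of_le_of_lt (hα i).1 hij
      have := key j 0 ⟨le_refl 0, zero_le_one⟩
      nlinarith
  intro i j
  rcases lt_trichotomy (α i) (α j) with h | h | h
  · exact (main i j h).elim
  · exact h
  · exact (main j i h).elim
end

section
/- Consider a heterogeneous game Γ(n,T,x,y,z) with y > 0 and z > 0. Let (T_1, T_2) be a partition of T into two nonempty sets, X_1 = ∑_{t∈T_1} x_t and X_2 = ∑_{t∈T_2} x_t. Let α* be the strategy taking value a_1 ∈ [0,1] on T_1 and a_2 ∈ [0,1] on T_2, with a_1 < a_2. Then α* is a symmetric Nash equilibrium if and only if one of the following holds: (1) a_2 = 1, a_1 = ((n−1)·ζ − n·X_2)/(n·X_1 − 1), and X_2 < (1 − 1/n)·ζ; (2) a_1 = 0, a_2 = 1, and (1 − 1/n)·ζ ≤ X_2 ≤ (1 − 1/n)·ζ + 1/n; (3) a_1 = 0, a_2 = (n−1)·ζ/(n·X_2 − 1), and X_2 > (1 − 1/n)·ζ + 1/n. -/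
open Finset

lemma br_iff {T : Type*} [Fintype T] [DecidableEq T] (c α : T → ℝ) (hα : IsStrategy α) :
    (∀ β : T → ℝ, IsStrategy β → ∑ j, c j * β j ≤ ∑ j, c j * α j) ↔
      ∀ j, (α j < 1 → c j ≤ 0) ∧ (0 < α j → 0 ≤ c j) := by
  have key : ∀ (j : T) (b : ℝ),
      ∑ j', c j' * Function.update α j b j' =
        c j * b + ∑ j' ∈ univ.erase j, c j' * α j' := by
    intro j b
    rw [← Finset.add_sum_erase _ _ (mem_univ j)]
    congr 1
    · simp [Function.update]
    · exact Finset.sum_congr rfl fun j' hj' => by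
        simp [Function.update, Finset.ne_of_mem_erase hj']
  have keyα : ∀ j : T, ∑ j', c j' * α j' = c j * α j + ∑ j' ∈ univ.erase j, c j' * α j' :=
    fun j => (Finset.add_sum_erase _ _ (mem_univ j)).symm
  constructor
  · intro h j
    constructor
    · intro hj1
      have hβ : IsStrategy (Function.update α j 1) := by
        intro t
        rcases eq_or_ne t j with rfl | ht
        · simp
        · simpa [Function.update, ht] using hα t
      have h1 := h _ hβ
      rw [key j 1, keyα j] at h1
      nlinarith
    · intro hj0
      have hβ : IsStrategy (Function.update α j 0) := by
        intro t
        rcases eq_or_ne t j with rfl | ht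
        · simp
        · simpa [Function.update, ht] using hα t
      have h1 := h _ hβ
      rw [key j 0, keyα j] at h1
      nlinarith
  · intro h β hβ
    apply Finset.sum_le_sum
    intro j _
    rcases lt_trichotomy (c j) 0 with hc | hc | hc
    · have ha0 : α j = 0 := by
        by_contra h0
        have : 0 < α j := lt_of_le_of_ne (hα j).1 (Ne.symm h0)
        linarith [(h j).2 this]
      rw [ha0]
      nlinarith [(hβ j).1]
    · simp [hc]
    · have ha1 : α j = 1 := by
        by_contra h0
        have : α j < 1 := lt_of_le_of_ne (hα j).2 h0
        linarith [(h j).1 this]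
      rw [ha1]
      nlinarith [(hβ j).2]

set_option maxHeartbeats 1000000 in
theorem stmt9 {T : Type*} [Fintype T] [DecidableEq T] (hT : 2 ≤ Fintype.card T)
    (n : ℕ) (x : T → ℝ) (hx : ∑ t, x t = 1)
    (hxt : ∀ t : T, 1 < (n : ℝ) * x t ∧ (n : ℝ) * x t < n)
    (y z : ℝ) (hy : 0 < y) (hz : 0 < z)
    (T1 T2 : Finset T) (hT1 : T1.Nonempty) (hT2 : T2.Nonempty)
    (hdisj : Disjoint T1 T2) (hcover : T1 ∪ T2 = Finset.univ)
    (a1 a2 : ℝ) (ha1 : a1 ∈ Set.Icc (0 : ℝ) 1) (ha2 : a2 ∈ Set.Icc (0 : ℝ) 1)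
    (h12 : a1 < a2) :
    IsSymNash n x y z (fun t => if t ∈ T1 then a1 else a2) ↔
      ((a2 = 1 ∧
          a1 = (((n : ℝ) - 1) * (y / (y + z)) - (n : ℝ) * ∑ t ∈ T2, x t) /
                 ((n : ℝ) * ∑ t ∈ T1, x t - 1) ∧
          ∑ t ∈ T2, x t < (1 - 1 / (n : ℝ)) * (y / (y + z))) ∨
       (a1 = 0 ∧ a2 = 1 ∧
          (1 - 1 / (n : ℝ)) * (y / (y + z)) ≤ ∑ t ∈ T2, x t ∧
          ∑ t ∈ T2, x t ≤ (1 - 1 / (n : ℝ)) * (y / (y + z)) + 1 / (n : ℝ)) ∨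
       (a1 = 0 ∧
          a2 = ((n : ℝ) - 1) * (y / (y + z)) / ((n : ℝ) * ∑ t ∈ T2, x t - 1) ∧
          (1 - 1 / (n : ℝ)) * (y / (y + z)) + 1 / (n : ℝ) < ∑ t ∈ T2, x t)) := by
  set X1 := ∑ t ∈ T1, x t with hX1def
  set X2 := ∑ t ∈ T2, x t with hX2def
  have hw : 0 < y + z := by linarith
  have hnpos : (0:ℝ) < n := by
    have := (hxt hT1.choose).1
    by_contra h
    push_neg at h
    rcases (hxt hT1.choose) with ⟨h1, h2⟩
    linarith
  have hx0 : ∀ t, 0 < x t := by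
    intro t
    rcases hxt t with ⟨h1, _⟩
    nlinarith
  have hmem : ∀ t : T, t ∉ T1 ↔ t ∈ T2 := by
    intro t
    constructor
    · intro h
      have : t ∈ T1 ∪ T2 := hcover ▸ mem_univ t
      rcases mem_union.mp this with h' | h'
      · exact absurd h' h
      · exact h'
    · intro h2 h1
      exact (Finset.disjoint_left.mp hdisj h1) h2
  have hnX1 : 1 < (n:ℝ) * X1 := by
    have h1 : (T1.card : ℝ) < ∑ t ∈ T1, (n:ℝ) * x t := by
      calc (T1.card : ℝ) = ∑ _t ∈ T1, (1:ℝ) := by simp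
        _ < ∑ t ∈ T1, (n:ℝ) * x t :=
          Finset.sum_lt_sum_of_nonempty hT1 fun t _ => (hxt t).1
    have h2 : (1:ℝ) ≤ T1.card := by exact_mod_cast hT1.card_pos
    rw [hX1def, Finset.mul_sum]
    linarith
  have hnX2 : 1 < (n:ℝ) * X2 := by
    have h1 : (T2.card : ℝ) < ∑ t ∈ T2, (n:ℝ) * x t := by
      calc (T2.card : ℝ) = ∑ _t ∈ T2, (1:ℝ) := by simp
        _ < ∑ t ∈ T2, (n:ℝ) * x t :=
          Finset.sum_lt_sum_of_nonempty hT2 fun t _ => (hxt t).1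
    have h2 : (1:ℝ) ≤ T2.card := by exact_mod_cast hT2.card_pos
    rw [hX2def, Finset.mul_sum]
    linarith
  have hX12 : X1 + X2 = 1 := by
    rw [hX1def, hX2def, ← Finset.sum_union hdisj, hcover, hx]
  have hn2 : (2:ℝ) < n := by nlinarith
  have hn1 : (0:ℝ) < (n:ℝ) - 1 := by linarith
  set α : T → ℝ := fun t => if t ∈ T1 then a1 else a2 with hαdef
  have hαs : IsStrategy α := by
    intro t
    by_cases ht : t ∈ T1 <;> simp only [hαdef, ht, if_true, if_false] <;> [exact ha1; exact ha2]
  have hS : ∑ i, x i * α i = X1 * a1 + X2 * a2 := by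
    rw [← hcover, Finset.sum_union hdisj]
    congr 1
    · rw [hX1def, Finset.sum_mul]
      exact Finset.sum_congr rfl fun t ht => by simp [hαdef, ht]
    · rw [hX2def, Finset.sum_mul]
      exact Finset.sum_congr rfl fun t ht => by
        simp [hαdef, (hmem t).mpr ht, Finset.disjoint_right.mp hdisj ht]
  set c : T → ℝ := fun j => (x j / ((n:ℝ)-1)) *
    (((n:ℝ)-1)*y + (y+z)*α j - (n:ℝ)*(y+z)*∑ i, x i * α i) with hcdef
  have hU : ∀ β : T → ℝ, U n x y z β α = z * (∑ j, x j * α j) + ∑ j, c j * β j := by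
    intro β
    simp only [U, hcdef]
  have step1 : IsSymNash n x y z α ↔
      ∀ j, (α j < 1 → c j ≤ 0) ∧ (0 < α j → 0 ≤ c j) := by
    rw [IsSymNash, ← br_iff c α hαs]
    constructor
    · rintro ⟨_, h⟩ β hβ
      have := h β hβ
      rw [hU β, hU α] at this
      linarith
    · intro h
      refine ⟨hαs, fun β hβ => ?_⟩
      rw [hU β, hU α]
      have := h β hβ
      linarith
  set B1 : ℝ := ((n:ℝ)-1)*y + (y+z)*a1 - (n:ℝ)*(y+z)*(X1*a1 + X2*a2) with hB1def
  set B2 : ℝ := ((n:ℝ)-1)*y + (y+z)*a2 - (n:ℝ)*(y+z)*(X1*a1 + X2*a2) with hB2def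
  have hc1 : ∀ j ∈ T1, c j = (x j / ((n:ℝ)-1)) * B1 := by
    intro j hj
    rw [hcdef]
    simp only [hαdef, hj, if_true]
    rw [hS]
  have hc2 : ∀ j ∈ T2, c j = (x j / ((n:ℝ)-1)) * B2 := by
    intro j hj
    rw [hcdef]
    simp only [hαdef, Finset.disjoint_right.mp hdisj hj, if_false]
    rw [hS]
  have hpos : ∀ j : T, 0 < x j / ((n:ℝ)-1) := fun j => div_pos (hx0 j) hn1
  have ha1lt : a1 < 1 := lt_of_lt_of_le h12 ha2.2
  have ha2pos : 0 < a2 := lt_of_le_of_lt ha1.1 h12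
  have step2 : (∀ j, (α j < 1 → c j ≤ 0) ∧ (0 < α j → 0 ≤ c j)) ↔
      (B1 ≤ 0 ∧ (0 < a1 → 0 ≤ B1) ∧ 0 ≤ B2 ∧ (a2 < 1 → B2 ≤ 0)) := by
    constructor
    · intro h
      obtain ⟨j1, hj1⟩ := hT1
      obtain ⟨j2, hj2⟩ := hT2
      have e1 : α j1 = a1 := by simp [hαdef, hj1]
      have e2 : α j2 = a2 := by simp [hαdef, Finset.disjoint_right.mp hdisj hj2]
      have k1 := (h j1).1 (by rw [e1]; exact ha1lt)
      have k2 := (h j2).2 (by rw [e2]; exact ha2pos)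
      rw [hc1 j1 hj1] at k1
      rw [hc2 j2 hj2] at k2
      refine ⟨by nlinarith [hpos j1], fun h0 => ?_, by nlinarith [hpos j2], fun h1 => ?_⟩
      · have := (h j1).2 (by rw [e1]; exact h0)
        rw [hc1 j1 hj1] at this
        nlinarith [hpos j1]
      · have := (h j2).1 (by rw [e2]; exact h1)
        rw [hc2 j2 hj2] at this
        nlinarith [hpos j2]
    · rintro ⟨k1, k2, k3, k4⟩ j
      by_cases hj : j ∈ T1
      · have e : α j = a1 := by simp [hαdef, hj]
        rw [hc1 j hj, e]
        constructor
        · intro _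
          exact mul_nonpos_of_nonneg_of_nonpos (le_of_lt (hpos j)) k1
        · intro h0
          exact mul_nonneg (le_of_lt (hpos j)) (k2 h0)
      · have hj2 : j ∈ T2 := (hmem j).mp hj
        have e : α j = a2 := by simp [hαdef, hj]
        rw [hc2 j hj2, e]
        constructor
        · intro h1
          exact mul_nonpos_of_nonneg_of_nonpos (le_of_lt (hpos j)) (k4 h1)
        · intro _
          exact mul_nonneg (le_of_lt (hpos j)) k3
  rw [step1, step2]
  rw [hB1def, hB2def]
  clear_value α c B1 B2
  have hn0 : (n:ℝ) ≠ 0 := ne_of_gt hnpos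
  have hw0 : y + z ≠ 0 := ne_of_gt hw
  have hnw : (0:ℝ) < (n:ℝ)*(y+z) := by positivity
  have hd1 : (0:ℝ) < (n:ℝ)*X1 - 1 := by linarith
  have hd2 : (0:ℝ) < (n:ℝ)*X2 - 1 := by linarith
  have hz1 : (1 - 1/(n:ℝ)) * (y/(y+z)) = ((n:ℝ)-1)*y/((n:ℝ)*(y+z)) := by
    field_simp
  have hz2 : (1 - 1/(n:ℝ)) * (y/(y+z)) + 1/(n:ℝ) = (((n:ℝ)-1)*y + (y+z))/((n:ℝ)*(y+z)) := by
    field_simp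
  constructor
  · rintro ⟨k1, k2, k3, k4⟩
    rcases eq_or_lt_of_le ha1.1 with h0 | h0
    · subst h0
      rcases eq_or_lt_of_le ha2.2 with h1 | h1
      · subst h1
        right; left
        refine ⟨rfl, rfl, ?_, ?_⟩
        · rw [hz1, div_le_iff₀ hnw]
          nlinarith [k1]
        · rw [hz2, le_div_iff₀ hnw]
          nlinarith [k3]
      · right; right
        have hB2z := le_antisymm (k4 h1) k3
        refine ⟨rfl, ?_, ?_⟩
        · rw [eq_div_iff (ne_of_gt hd2)]
          field_simp
          linear_combination -hB2z
        · rw [hz2, div_lt_iff₀ hnw]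
          nlinarith [hB2z, mul_pos (mul_pos (show (0:ℝ) < 1 - a2 by linarith) hw) hd2]
    · left
      have hB1z := le_antisymm k1 (k2 h0)
      have ha2e : a2 = 1 := by
        by_contra hne
        have h1 : a2 < 1 := lt_of_le_of_ne ha2.2 hne
        have := k4 h1
        nlinarith [hB1z]
      subst ha2e
      refine ⟨rfl, ?_, ?_⟩
      · rw [eq_div_iff (ne_of_gt hd1)]
        field_simp
        nlinarith [hB1z]
      · rw [hz1, lt_div_iff₀ hnw]
        nlinarith [hB1z, mul_pos (mul_pos h0 hw) hd1]
  · rintro (⟨ha2e, ha1e, hlt⟩ | ⟨ha1e, ha2e, hge, hle⟩ | ⟨ha1e, ha2e, hgt⟩)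
    · subst ha2e
      rw [hz1, lt_div_iff₀ hnw] at hlt
      have key : a1 * (((n:ℝ)*X1 - 1)*(y+z)) = ((n:ℝ)-1)*y - (n:ℝ)*X2*(y+z) := by
        rw [ha1e]
        field_simp
      have hB1z : ((n:ℝ)-1)*y + (y+z)*a1 - (n:ℝ)*(y+z)*(X1*a1 + X2*1) = 0 := by
        linear_combination -key
      exact ⟨le_of_eq hB1z, fun _ => ge_of_eq hB1z, by nlinarith [hB1z],
        fun h => absurd h (lt_irrefl 1)⟩
    · subst ha1e; subst ha2e
      rw [hz1, div_le_iff₀ hnw] at hge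
      rw [hz2, le_div_iff₀ hnw] at hle
      refine ⟨by nlinarith, fun h => absurd h (lt_irrefl 0), by nlinarith,
        fun h => absurd h (lt_irrefl 1)⟩
    · subst ha1e
      have key : a2 * (((n:ℝ)*X2 - 1)*(y+z)) = ((n:ℝ)-1)*y := by
        rw [ha2e]
        field_simp
      have hB2z : ((n:ℝ)-1)*y + (y+z)*a2 - (n:ℝ)*(y+z)*(X1*0 + X2*a2) = 0 := by
        linear_combination -key
      exact ⟨by nlinarith [hB2z, h12], fun h => absurd h (lt_irrefl 0),
        ge_of_eq hB2z, fun _ => le_of_eq hB2z⟩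
end

section
/- Consider a heterogeneous game Γ(n,T,x,y,z) with y > 0 and z > 0. Let (T_1, T_2) be a partition of T into two nonempty sets, X_1 = ∑_{t∈T_1} x_t and X_2 = ∑_{t∈T_2} x_t, and suppose X_2 < (1 − 1/n)·ζ. Then a_1 := ((n−1)·ζ − n·X_2)/(n·X_1 − 1) satisfies 0 < a_1 < 1, and the strategy α* taking value a_1 on T_1 and value 1 on T_2 is a symmetric Nash equilibrium. -/
open Finset

/-!
The payoff `U n x y z α β` is affine in the deviating strategy `α`, with coefficient
`payoffCoeff n x y z β j` in front of `α j`. Hence a strategy is a best reply to itself as soon as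
every coefficient either vanishes or is nonnegative at a type where the strategy already plays `1`.
For the strategy that plays `a₁` on `T₁` and `1` on `T₂`, the coefficient at `j` equals
`x j / (n - 1) * (y + z) * (α* j - a₁)`: the value `a₁` is exactly the level that makes the players of
`T₁` indifferent, while on `T₂` the coefficient is `(y + z) (1 - a₁) ≥ 0` up to a positive factor.
-/

namespace HeterogeneousGame

variable {T : Type*}

noncomputable def payoffCoeff [Fintype T] (n : ℕ) (x : T → ℝ) (y z : ℝ) (β : T → ℝ) (j : T) : ℝ :=
  x j / ((n : ℝ) - 1) *
    (((n : ℝ) - 1) * y + (y + z) * β j - (n : ℝ) * (y + z) * ∑ i, x i * β i)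

theorem U_eq_add_sum_payoffCoeff [Fintype T] (n : ℕ) (x : T → ℝ) (y z : ℝ) (α β : T → ℝ) :
    U n x y z α β = z * ∑ j, x j * β j + ∑ j, payoffCoeff n x y z β j * α j :=
  rfl

theorem isSymNash_of_payoffCoeff [Fintype T] {n : ℕ} {x : T → ℝ} {y z : ℝ} {α : T → ℝ}
    (hα : IsStrategy α)
    (h : ∀ j, payoffCoeff n x y z α j = 0 ∨ (0 ≤ payoffCoeff n x y z α j ∧ α j = 1)) :
    IsSymNash n x y z α := by
  refine ⟨hα, fun β hβ => ?_⟩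
  rw [U_eq_add_sum_payoffCoeff, U_eq_add_sum_payoffCoeff]
  refine add_le_add_right (sum_le_sum fun j _ => ?_) _
  rcases h j with hzero | ⟨hnonneg, hone⟩
  · rw [hzero, zero_mul, zero_mul]
  · rw [hone, mul_one]
    exact mul_le_of_le_one_right hnonneg (hβ j).2

noncomputable def mixedLevel (n : ℕ) (x : T → ℝ) (y z : ℝ) (T1 T2 : Finset T) : ℝ :=
  (((n : ℝ) - 1) * (y / (y + z)) - (n : ℝ) * ∑ t ∈ T2, x t) / ((n : ℝ) * ∑ t ∈ T1, x t - 1)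

def mixedStrategy [DecidableEq T] (T1 : Finset T) (a : ℝ) : T → ℝ :=
  fun t => if t ∈ T1 then a else 1

theorem mixedLevel_mem_Ioo {n : ℕ} {x : T → ℝ} {y z : ℝ} {T1 T2 : Finset T}
    (hn : 1 < (n : ℝ)) (hX : ∑ t ∈ T1, x t + ∑ t ∈ T2, x t = 1)
    (hden : 1 < (n : ℝ) * ∑ t ∈ T1, x t) (hy : 0 < y) (hz : 0 < z)
    (hX2 : ∑ t ∈ T2, x t < (1 - 1 / (n : ℝ)) * (y / (y + z))) :
    mixedLevel n x y z T1 T2 ∈ Set.Ioo 0 1 := by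
  have hζ1 : y / (y + z) < 1 := (div_lt_one (by linarith)).2 (by linarith)
  have hnX2 : (n : ℝ) * ∑ t ∈ T2, x t < ((n : ℝ) - 1) * (y / (y + z)) := by
    calc (n : ℝ) * ∑ t ∈ T2, x t < (n : ℝ) * ((1 - 1 / (n : ℝ)) * (y / (y + z))) := by gcongr
      _ = ((n : ℝ) - 1) * (y / (y + z)) := by field_simp
  unfold mixedLevel
  constructor
  · exact div_pos (by linarith) (by linarith)
  · rw [div_lt_one (by linarith)]
    have hnX : (n : ℝ) * ∑ t ∈ T1, x t = n - n * ∑ t ∈ T2, x t := by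
      linear_combination (n : ℝ) * hX
    have := mul_lt_mul_of_pos_left hζ1 (sub_pos.2 hn)
    linarith

theorem sum_mul_mixedStrategy [Fintype T] [DecidableEq T] {T1 T2 : Finset T}
    (hdisj : Disjoint T1 T2) (hcover : T1 ∪ T2 = univ) (x : T → ℝ) (a : ℝ) :
    ∑ i, x i * mixedStrategy T1 a i = a * ∑ i ∈ T1, x i + ∑ i ∈ T2, x i := by
  rw [← hcover, sum_union hdisj, mul_sum]
  congr 1 <;> refine sum_congr rfl fun i hi => ?_
  · rw [mixedStrategy, if_pos hi, mul_comm]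
  · rw [mixedStrategy, if_neg (disjoint_right.mp hdisj hi), mul_one]

theorem payoffCoeff_mixedStrategy [Fintype T] [DecidableEq T] {n : ℕ} {x : T → ℝ} {y z : ℝ}
    {T1 T2 : Finset T} (hdisj : Disjoint T1 T2) (hcover : T1 ∪ T2 = univ) (hyz : y + z ≠ 0)
    (hden : (n : ℝ) * ∑ t ∈ T1, x t - 1 ≠ 0) (j : T) :
    payoffCoeff n x y z (mixedStrategy T1 (mixedLevel n x y z T1 T2)) j =
      x j / ((n : ℝ) - 1) * ((y + z) *
        (mixedStrategy T1 (mixedLevel n x y z T1 T2) j - mixedLevel n x y z T1 T2)) := by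
  rw [payoffCoeff, sum_mul_mixedStrategy hdisj hcover]
  congr 1
  generalize mixedStrategy T1 (mixedLevel n x y z T1 T2) j = b
  unfold mixedLevel
  field_simp
  ring

theorem isSymNash_mixedStrategy [Fintype T] [DecidableEq T] {n : ℕ} {x : T → ℝ} {y z : ℝ}
    {T1 T2 : Finset T} (hdisj : Disjoint T1 T2) (hcover : T1 ∪ T2 = univ)
    (hn : 1 ≤ (n : ℝ)) (hx : ∀ t, 0 ≤ x t) (hyz : 0 < y + z)
    (hden : (n : ℝ) * ∑ t ∈ T1, x t - 1 ≠ 0) (ha : mixedLevel n x y z T1 T2 ∈ Set.Icc 0 1) :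
    IsSymNash n x y z (mixedStrategy T1 (mixedLevel n x y z T1 T2)) := by
  have hstrat : IsStrategy (mixedStrategy T1 (mixedLevel n x y z T1 T2)) := fun t => by
    unfold mixedStrategy
    split_ifs
    exacts [ha, ⟨zero_le_one, le_rfl⟩]
  refine isSymNash_of_payoffCoeff hstrat fun j => ?_
  rw [payoffCoeff_mixedStrategy hdisj hcover hyz.ne' hden]
  by_cases hj : j ∈ T1
  · left
    simp only [mixedStrategy, if_pos hj, sub_self, mul_zero]
  · right
    simp only [mixedStrategy, if_neg hj, and_true]
    exact mul_nonneg (div_nonneg (hx j) (by linarith)) (mul_nonneg hyz.le (by linarith [ha.2]))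

end HeterogeneousGame

open HeterogeneousGame in
theorem stmt10_general {T : Type*} [Fintype T] [DecidableEq T]
    (n : ℕ) (x : T → ℝ) (hx : ∑ t, x t = 1)
    (hxt : ∀ t : T, 1 < (n : ℝ) * x t ∧ (n : ℝ) * x t < n)
    (y z : ℝ) (hy : 0 < y) (hz : 0 < z)
    (T1 T2 : Finset T) (hT1 : T1.Nonempty)
    (hdisj : Disjoint T1 T2) (hcover : T1 ∪ T2 = Finset.univ)
    (hX2 : ∑ t ∈ T2, x t < (1 - 1 / (n : ℝ)) * (y / (y + z))) :
    (0 < (((n : ℝ) - 1) * (y / (y + z)) - (n : ℝ) * ∑ t ∈ T2, x t) /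
           ((n : ℝ) * ∑ t ∈ T1, x t - 1) ∧
     (((n : ℝ) - 1) * (y / (y + z)) - (n : ℝ) * ∑ t ∈ T2, x t) /
           ((n : ℝ) * ∑ t ∈ T1, x t - 1) < 1) ∧
    IsSymNash n x y z
      (fun t => if t ∈ T1 then
          (((n : ℝ) - 1) * (y / (y + z)) - (n : ℝ) * ∑ t ∈ T2, x t) /
            ((n : ℝ) * ∑ t ∈ T1, x t - 1)
        else 1) := by
  obtain ⟨t0, ht0⟩ := hT1
  have hn : (1 : ℝ) < n := (hxt t0).1.trans (hxt t0).2
  have hxpos : ∀ t, 0 < x t := fun t =>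
    pos_of_mul_pos_right (one_pos.trans (hxt t).1) (Nat.cast_nonneg n)
  have hX : ∑ t ∈ T1, x t + ∑ t ∈ T2, x t = 1 := by rw [← sum_union hdisj, hcover, hx]
  have hden : 1 < (n : ℝ) * ∑ t ∈ T1, x t :=
    (hxt t0).1.trans_le (mul_le_mul_of_nonneg_left
      (single_le_sum (fun t _ => (hxpos t).le) ht0) (Nat.cast_nonneg n))
  have ha := mixedLevel_mem_Ioo hn hX hden hy hz hX2
  exact ⟨ha, isSymNash_mixedStrategy hdisj hcover hn.le (fun t => (hxpos t).le)
    (by linarith) (sub_pos.2 hden).ne' (Set.Ioo_subset_Icc_self ha)⟩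

theorem stmt10 {T : Type*} [Fintype T] [DecidableEq T] (hT : 2 ≤ Fintype.card T)
    (n : ℕ) (x : T → ℝ) (hx : ∑ t, x t = 1)
    (hxt : ∀ t : T, 1 < (n : ℝ) * x t ∧ (n : ℝ) * x t < n)
    (y z : ℝ) (hy : 0 < y) (hz : 0 < z)
    (T1 T2 : Finset T) (hT1 : T1.Nonempty) (hT2 : T2.Nonempty)
    (hdisj : Disjoint T1 T2) (hcover : T1 ∪ T2 = Finset.univ)
    (hX2 : ∑ t ∈ T2, x t < (1 - 1 / (n : ℝ)) * (y / (y + z))) :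
    (0 < (((n : ℝ) - 1) * (y / (y + z)) - (n : ℝ) * ∑ t ∈ T2, x t) /
           ((n : ℝ) * ∑ t ∈ T1, x t - 1) ∧
     (((n : ℝ) - 1) * (y / (y + z)) - (n : ℝ) * ∑ t ∈ T2, x t) /
           ((n : ℝ) * ∑ t ∈ T1, x t - 1) < 1) ∧
    IsSymNash n x y z
      (fun t => if t ∈ T1 then
          (((n : ℝ) - 1) * (y / (y + z)) - (n : ℝ) * ∑ t ∈ T2, x t) /
            ((n : ℝ) * ∑ t ∈ T1, x t - 1)
        else 1) :=
  stmt10_general n x hx hxt y z hy hz T1 T2 hT1 hdisj hcover hX2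
end

section
/- Consider a heterogeneous game Γ(n,T,x,y,z) with y > 0 and z > 0. Let (T_1, T_2) be a partition of T into two nonempty sets and X_2 = ∑_{t∈T_2} x_t, and suppose (1 − 1/n)·ζ ≤ X_2 ≤ (1 − 1/n)·ζ + 1/n. Then the strategy α* taking value 0 on T_1 and value 1 on T_2 is a symmetric Nash equilibrium. -/
open Finset

theorem stmt11 {T : Type*} [Fintype T] [DecidableEq T] (hT : 2 ≤ Fintype.card T)
    (n : ℕ) (x : T → ℝ) (hx : ∑ t, x t = 1)
    (hxt : ∀ t : T, 1 < (n : ℝ) * x t ∧ (n : ℝ) * x t < n)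
    (y z : ℝ) (hy : 0 < y) (hz : 0 < z)
    (T1 T2 : Finset T) (hT1 : T1.Nonempty) (hT2 : T2.Nonempty)
    (hdisj : Disjoint T1 T2) (hcover : T1 ∪ T2 = Finset.univ)
    (hX2l : (1 - 1 / (n : ℝ)) * (y / (y + z)) ≤ ∑ t ∈ T2, x t)
    (hX2u : ∑ t ∈ T2, x t ≤ (1 - 1 / (n : ℝ)) * (y / (y + z)) + 1 / (n : ℝ)) :
    IsSymNash n x y z (fun t => if t ∈ T1 then 0 else 1) := by
  set αs : T → ℝ := fun t => if t ∈ T1 then 0 else 1 with hαs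
  have hstrat : IsStrategy αs := by
    intro t; by_cases h : t ∈ T1 <;> simp [αs, h]
  obtain ⟨t0, ht0⟩ := hT1
  have hn1 : (1:ℝ) < n := lt_trans (hxt t0).1 (hxt t0).2
  have hn0 : (0:ℝ) < n := by linarith
  have hnm : (0:ℝ) < (n:ℝ) - 1 := by linarith
  have hyz : (0:ℝ) < y + z := by linarith
  have xpos : ∀ t, 0 < x t := fun t => by nlinarith [(hxt t).1]
  set X2 := ∑ t ∈ T2, x t with hX2
  have hS : ∑ i, x i * αs i = X2 := by
    have h1 : ∑ i ∈ T1, x i * αs i = 0 :=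
      Finset.sum_eq_zero (fun i hi => by simp [αs, hi])
    have h2 : ∑ i ∈ T2, x i * αs i = X2 :=
      Finset.sum_congr rfl (fun i hi => by
        have hni : i ∉ T1 := Finset.disjoint_right.mp hdisj hi
        simp [αs, hni])
    calc ∑ i, x i * αs i = ∑ i ∈ T1 ∪ T2, x i * αs i := by rw [hcover]
      _ = ∑ i ∈ T1, x i * αs i + ∑ i ∈ T2, x i * αs i := Finset.sum_union hdisj
      _ = X2 := by rw [h1, h2, zero_add]
  have key1 : ((n:ℝ)-1)*y ≤ (n:ℝ)*(y+z)*X2 := by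
    have hk : (1 - 1/(n:ℝ)) * (y/(y+z)) * ((n:ℝ)*(y+z)) = ((n:ℝ)-1)*y := by
      field_simp
      try ring
    nlinarith [mul_le_mul_of_nonneg_right hX2l (le_of_lt (mul_pos hn0 hyz))]
  have key2 : (n:ℝ)*(y+z)*X2 ≤ ((n:ℝ)-1)*y + (y+z) := by
    have hk : ((1 - 1/(n:ℝ)) * (y/(y+z)) + 1/(n:ℝ)) * ((n:ℝ)*(y+z)) = ((n:ℝ)-1)*y + (y+z) := by
      field_simp
      try ring
    nlinarith [mul_le_mul_of_nonneg_right hX2u (le_of_lt (mul_pos hn0 hyz))]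
  refine ⟨hstrat, fun β hβ => ?_⟩
  simp only [U]
  rw [hS]
  have hsum : ∑ j, (x j / ((n:ℝ) - 1)) *
      (((n:ℝ) - 1) * y + (y + z) * αs j - (n:ℝ) * (y + z) * X2) * β j ≤
      ∑ j, (x j / ((n:ℝ) - 1)) *
      (((n:ℝ) - 1) * y + (y + z) * αs j - (n:ℝ) * (y + z) * X2) * αs j := by
    apply Finset.sum_le_sum
    intro j _
    have hd : 0 ≤ x j / ((n:ℝ) - 1) := le_of_lt (div_pos (xpos j) hnm)
    by_cases hj : j ∈ T1
    · have haj : αs j = 0 := by simp [αs, hj]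
      rw [haj]
      have hC : ((n:ℝ) - 1) * y + (y + z) * 0 - (n:ℝ) * (y + z) * X2 ≤ 0 := by linarith
      have h1 : x j / ((n:ℝ) - 1) * (((n:ℝ) - 1) * y + (y + z) * 0 - (n:ℝ) * (y + z) * X2) ≤ 0 :=
        mul_nonpos_of_nonneg_of_nonpos hd hC
      nlinarith [(hβ j).1]
    · have haj : αs j = 1 := by simp [αs, hj]
      rw [haj]
      have hC : 0 ≤ ((n:ℝ) - 1) * y + (y + z) * 1 - (n:ℝ) * (y + z) * X2 := by linarith
      have h1 : 0 ≤ x j / ((n:ℝ) - 1) * (((n:ℝ) - 1) * y + (y + z) * 1 - (n:ℝ) * (y + z) * X2) :=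
        mul_nonneg hd hC
      nlinarith [(hβ j).2]
  linarith
end

section
/- Consider a heterogeneous game Γ(n,T,x,y,z) with y > 0 and z > 0. Let (T_1, T_2) be a partition of T into two nonempty sets and X_2 = ∑_{t∈T_2} x_t, and suppose X_2 > (1 − 1/n)·ζ + 1/n. Then a_2 := (n−1)·ζ/(n·X_2 − 1) satisfies 0 < a_2 < 1, and the strategy α* taking value 0 on T_1 and value a_2 on T_2 is a symmetric Nash equilibrium. -/
/-!
The payoff `U β α` is affine in the deviation `β`, with the coefficient `gain α j` of `β j`
depending only on `α`; so `α` is an equilibrium as soon as each `α j` maximises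
`b ↦ gain α j * b` on `[0, 1]`. For the strategy that is `0` on `T₁` and `a` on `T₂`,
writing `X₂ = ∑_{T₂} x`, the gain on `T₂` is proportional to `(n-1)y - (y+z) a (n X₂ - 1)`,
and `a₂` is exactly the level making it vanish (indifference on `T₂`); the gain on `T₁` is
then `-(y+z) a₂` times a nonnegative factor, so `0` is a best reply there. The threshold on
`X₂` is equivalent to `(n-1) ζ < n X₂ - 1`, i.e. `a₂ < 1`.
-/

open Finset

namespace HeterogeneousGame

variable {T : Type*} [Fintype T]

noncomputable def gain (n : ℕ) (x : T → ℝ) (y z : ℝ) (α : T → ℝ) (j : T) : ℝ :=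
  x j / ((n : ℝ) - 1) *
    (((n : ℝ) - 1) * y + (y + z) * α j - (n : ℝ) * (y + z) * ∑ i, x i * α i)

theorem U_eq_add_sum_gain_mul (n : ℕ) (x : T → ℝ) (y z : ℝ) (α β : T → ℝ) :
    U n x y z β α = z * ∑ j, x j * α j + ∑ j, gain n x y z α j * β j :=
  rfl

theorem isSymNash_of_forall_gain_mul_le {n : ℕ} {x : T → ℝ} {y z : ℝ} {α : T → ℝ}
    (hα : IsStrategy α)
    (hbest : ∀ j, ∀ b ∈ Set.Icc (0 : ℝ) 1, gain n x y z α j * b ≤ gain n x y z α j * α j) :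
    IsSymNash n x y z α := by
  refine ⟨hα, fun β hβ => ?_⟩
  rw [U_eq_add_sum_gain_mul, U_eq_add_sum_gain_mul]
  exact add_le_add le_rfl (sum_le_sum fun j _ => hbest j (β j) (hβ j))

section TwoLevel

variable [DecidableEq T] {T₁ T₂ : Finset T}

theorem sum_mul_ite_mem_eq (x : T → ℝ) (a : ℝ) (hdisj : Disjoint T₁ T₂)
    (hcover : T₁ ∪ T₂ = univ) :
    ∑ i, x i * (if i ∈ T₁ then 0 else a) = (∑ t ∈ T₂, x t) * a := by
  rw [← hcover, sum_union hdisj, sum_mul]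
  have hT₁ : ∑ i ∈ T₁, x i * (if i ∈ T₁ then 0 else a) = 0 :=
    sum_eq_zero fun i hi => by simp [hi]
  rw [hT₁, zero_add]
  exact sum_congr rfl fun i hi => by simp [disjoint_right.mp hdisj hi]

theorem isSymNash_ite_mem {n : ℕ} {x : T → ℝ} {y z a : ℝ} (hn : 1 ≤ n) (hx : ∀ t, 0 ≤ x t)
    (hyz : 0 ≤ y + z) (hdisj : Disjoint T₁ T₂) (hcover : T₁ ∪ T₂ = univ)
    (ha : a ∈ Set.Icc (0 : ℝ) 1)
    (hindiff : (y + z) * a * ((n : ℝ) * ∑ t ∈ T₂, x t - 1) = ((n : ℝ) - 1) * y) :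
    IsSymNash n x y z (fun t => if t ∈ T₁ then 0 else a) := by
  refine isSymNash_of_forall_gain_mul_le (fun t => by split_ifs <;> simp [ha.1, ha.2]) ?_
  intro j b hb
  have hS := sum_mul_ite_mem_eq x a hdisj hcover
  have hweight : 0 ≤ x j / ((n : ℝ) - 1) :=
    div_nonneg (hx j) (sub_nonneg.2 (by exact_mod_cast hn))
  by_cases hj : j ∈ T₁
  · have hneg : gain n x y z (fun t => if t ∈ T₁ then 0 else a) j ≤ 0 := by
      simp only [gain, hj, if_true, hS]
      exact mul_nonpos_of_nonneg_of_nonpos hweight (by nlinarith [mul_nonneg hyz ha.1])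
    simpa [hj] using mul_nonpos_of_nonpos_of_nonneg hneg hb.1
  · have hzero : gain n x y z (fun t => if t ∈ T₁ then 0 else a) j = 0 := by
      simp only [gain, hj, if_false, hS]
      exact mul_eq_zero_of_right _ (by linear_combination -hindiff)
    simp [hzero]

end TwoLevel

theorem indifference_level_spec {n : ℕ} {y z X₂ : ℝ} (hn : 1 < (n : ℝ)) (hy : 0 < y)
    (hz : 0 < z) (hX₂ : (1 - 1 / (n : ℝ)) * (y / (y + z)) + 1 / (n : ℝ) < X₂) :
    let a := ((n : ℝ) - 1) * (y / (y + z)) / ((n : ℝ) * X₂ - 1)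
    0 < a ∧ a < 1 ∧ (y + z) * a * ((n : ℝ) * X₂ - 1) = ((n : ℝ) - 1) * y := by
  intro a
  have hyz : 0 < y + z := by linarith
  have hnum : 0 < ((n : ℝ) - 1) * (y / (y + z)) := mul_pos (by linarith) (div_pos hy hyz)
  have hden : ((n : ℝ) - 1) * (y / (y + z)) < (n : ℝ) * X₂ - 1 := by
    have := mul_lt_mul_of_pos_left hX₂ (by linarith : (0 : ℝ) < n)
    field_simp at this ⊢
    linarith
  refine ⟨div_pos hnum (hnum.trans hden), (div_lt_one (hnum.trans hden)).2 hden, ?_⟩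
  simp only [a]
  field_simp [(hnum.trans hden).ne']

end HeterogeneousGame

theorem stmt12_general {T : Type*} [Fintype T] [DecidableEq T]
    (n : ℕ) (x : T → ℝ)
    (hxt : ∀ t : T, 1 < (n : ℝ) * x t ∧ (n : ℝ) * x t < n)
    (y z : ℝ) (hy : 0 < y) (hz : 0 < z)
    (T1 T2 : Finset T) (hT2 : T2.Nonempty)
    (hdisj : Disjoint T1 T2) (hcover : T1 ∪ T2 = Finset.univ)
    (hX2 : (1 - 1 / (n : ℝ)) * (y / (y + z)) + 1 / (n : ℝ) < ∑ t ∈ T2, x t) :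
    (0 < ((n : ℝ) - 1) * (y / (y + z)) / ((n : ℝ) * ∑ t ∈ T2, x t - 1) ∧
     ((n : ℝ) - 1) * (y / (y + z)) / ((n : ℝ) * ∑ t ∈ T2, x t - 1) < 1) ∧
    IsSymNash n x y z
      (fun t => if t ∈ T1 then 0
        else ((n : ℝ) - 1) * (y / (y + z)) / ((n : ℝ) * ∑ t ∈ T2, x t - 1)) := by
  obtain ⟨t, -⟩ := hT2
  have hn : (1 : ℝ) < n := (hxt t).1.trans (hxt t).2
  have hx : ∀ j, 0 ≤ x j := fun j =>
    (pos_of_mul_pos_right ((zero_lt_one).trans (hxt j).1) (by linarith)).le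
  obtain ⟨hpos, hlt, hindiff⟩ := HeterogeneousGame.indifference_level_spec hn hy hz hX2
  exact ⟨⟨hpos, hlt⟩, HeterogeneousGame.isSymNash_ite_mem (by exact_mod_cast hn.le) hx
    (by linarith) hdisj hcover ⟨hpos.le, hlt.le⟩ hindiff⟩

theorem stmt12 {T : Type*} [Fintype T] [DecidableEq T] (hT : 2 ≤ Fintype.card T)
    (n : ℕ) (x : T → ℝ) (hx : ∑ t, x t = 1)
    (hxt : ∀ t : T, 1 < (n : ℝ) * x t ∧ (n : ℝ) * x t < n)
    (y z : ℝ) (hy : 0 < y) (hz : 0 < z)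
    (T1 T2 : Finset T) (hT1 : T1.Nonempty) (hT2 : T2.Nonempty)
    (hdisj : Disjoint T1 T2) (hcover : T1 ∪ T2 = Finset.univ)
    (hX2 : (1 - 1 / (n : ℝ)) * (y / (y + z)) + 1 / (n : ℝ) < ∑ t ∈ T2, x t) :
    (0 < ((n : ℝ) - 1) * (y / (y + z)) / ((n : ℝ) * ∑ t ∈ T2, x t - 1) ∧
     ((n : ℝ) - 1) * (y / (y + z)) / ((n : ℝ) * ∑ t ∈ T2, x t - 1) < 1) ∧
    IsSymNash n x y z
      (fun t => if t ∈ T1 then 0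
        else ((n : ℝ) - 1) * (y / (y + z)) / ((n : ℝ) * ∑ t ∈ T2, x t - 1)) :=
  stmt12_general n x hxt y z hy hz T1 T2 hT2 hdisj hcover hX2
end

section
/- Consider a heterogeneous game Γ(n,T,x,y,z) with y > 0 and z > 0. Let (T_1, T_2, T_3) be a partition of T into three nonempty sets, X_1 = ∑_{t∈T_1} x_t, X_2 = ∑_{t∈T_2} x_t, X_3 = ∑_{t∈T_3} x_t, and λ = ((n−1)·ζ − n·X_3)/(n·X_2 − 1). Then the strategy α* taking value 0 on T_1, value λ on T_2 and value 1 on T_3 is a symmetric Nash equilibrium with 0 < λ < 1 if and only if X_3 < (1 − 1/n)·ζ and X_1 < (1 − 1/n)·(1 − ζ). -/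
/-!
Against a fixed opponent strategy `α`, the payoff `U β α` is affine in `β`, and the coefficient
of `β j` is `x j / (n - 1) * (y + z) * (α j - c)`, where `c` is the level at which the bracket in
`U` vanishes. Hence, if `0 ≤ c ≤ 1`, `α` is a best reply to itself as soon as it takes only the
values `0`, `c` and `1`. For the strategy that is `0` on `T1`, `λ` on `T2` and `1` on `T3`, the
choice of `λ` makes `c = λ`; hence it is an equilibrium whenever `0 < λ < 1`, and these two
inequalities, multiplied out by `n * X2 - 1 > 0`, are the two bounds on `X3` and `X1`.
-/

open Finset

section

variable {T : Type*}

theorem sum_univ_eq_add_add_of_partition [Fintype T] [DecidableEq T] {M : Type*}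
    [AddCommMonoid M] {T1 T2 T3 : Finset T}
    (h12 : Disjoint T1 T2) (h13 : Disjoint T1 T3) (h23 : Disjoint T2 T3)
    (hcover : T1 ∪ T2 ∪ T3 = univ) (f : T → M) :
    ∑ t, f t = ∑ t ∈ T1, f t + ∑ t ∈ T2, f t + ∑ t ∈ T3, f t := by
  rw [← hcover, sum_union (disjoint_union_left.mpr ⟨h13, h23⟩), sum_union h12]

theorem isSymNash_of_indifference [Fintype T] {n : ℕ} {x α : T → ℝ} {y z c : ℝ}
    (hn : 1 ≤ n) (hx : ∀ t, 0 ≤ x t) (hyz : 0 ≤ y + z) (hc0 : 0 ≤ c) (hc1 : c ≤ 1)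
    (hα : ∀ t, α t = 0 ∨ α t = c ∨ α t = 1)
    (hcrit : (n : ℝ) * (y + z) * ∑ i, x i * α i = ((n : ℝ) - 1) * y + (y + z) * c) :
    IsSymNash n x y z α := by
  refine ⟨fun t => ?_, fun β hβ => ?_⟩
  · rcases hα t with h | h | h <;> rw [h] <;> exact ⟨by linarith, by linarith⟩
  simp only [U, hcrit]
  refine add_le_add_right (sum_le_sum fun j _ => ?_) _
  have hw : 0 ≤ x j / ((n : ℝ) - 1) :=
    div_nonneg (hx j) (sub_nonneg.mpr (by exact_mod_cast hn))
  obtain ⟨hβ0, hβ1⟩ := hβ j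
  have hreply : (α j - c) * (β j - α j) ≤ 0 := by
    rcases hα j with h | h | h <;> rw [h]
    · nlinarith
    · simp
    · nlinarith
  linear_combination mul_nonpos_of_nonneg_of_nonpos (mul_nonneg hw hyz) hreply

variable [DecidableEq T]

def threeLevelStrategy (T1 T2 : Finset T) (c : ℝ) : T → ℝ :=
  fun t => if t ∈ T1 then 0 else if t ∈ T2 then c else 1

theorem threeLevelStrategy_eq_or (T1 T2 : Finset T) (c : ℝ) (t : T) :
    threeLevelStrategy T1 T2 c t = 0 ∨ threeLevelStrategy T1 T2 c t = c ∨
      threeLevelStrategy T1 T2 c t = 1 := by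
  unfold threeLevelStrategy
  split_ifs <;> simp

theorem sum_mul_threeLevelStrategy [Fintype T] {T1 T2 T3 : Finset T} (h12 : Disjoint T1 T2)
    (h13 : Disjoint T1 T3) (h23 : Disjoint T2 T3) (hcover : T1 ∪ T2 ∪ T3 = univ)
    (x : T → ℝ) (c : ℝ) :
    ∑ t, x t * threeLevelStrategy T1 T2 c t = c * ∑ t ∈ T2, x t + ∑ t ∈ T3, x t := by
  rw [sum_univ_eq_add_add_of_partition h12 h13 h23 hcover, mul_sum]
  have h1 : ∑ t ∈ T1, x t * threeLevelStrategy T1 T2 c t = 0 :=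
    sum_eq_zero fun t ht => by simp [threeLevelStrategy, ht]
  have h2 : ∑ t ∈ T2, x t * threeLevelStrategy T1 T2 c t = ∑ t ∈ T2, c * x t :=
    sum_congr rfl fun t ht => by
      simp [threeLevelStrategy, ht, disjoint_right.mp h12 ht, mul_comm]
  have h3 : ∑ t ∈ T3, x t * threeLevelStrategy T1 T2 c t = ∑ t ∈ T3, x t :=
    sum_congr rfl fun t ht => by
      simp [threeLevelStrategy, disjoint_right.mp h13 ht, disjoint_right.mp h23 ht]
  rw [h1, h2, h3, zero_add]

end

/-- The paper's `λ`, with `ζ = y / (y + z)` and `Xᵢ` the weight of `Tᵢ`. -/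
noncomputable def indifferenceLevel (n ζ X₂ X₃ : ℝ) : ℝ :=
  ((n - 1) * ζ - n * X₃) / (n * X₂ - 1)

theorem indifferenceLevel_pos_and_lt_one_iff {n ζ X₁ X₂ X₃ : ℝ} (hn : 0 < n)
    (hX₂ : 1 < n * X₂) (hX : X₁ + X₂ + X₃ = 1) :
    (0 < indifferenceLevel n ζ X₂ X₃ ∧ indifferenceLevel n ζ X₂ X₃ < 1) ↔
      (X₃ < (1 - 1 / n) * ζ ∧ X₁ < (1 - 1 / n) * (1 - ζ)) := by
  have hden : 0 < n * X₂ - 1 := sub_pos.mpr hX₂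
  have hscale (a b : ℝ) : b < (1 - 1 / n) * a ↔ n * b < (n - 1) * a := by
    rw [show (1 - 1 / n) * a = (n - 1) * a / n by field_simp, lt_div_iff₀ hn, mul_comm]
  rw [indifferenceLevel, div_pos_iff_of_pos_right hden, div_lt_one hden, hscale, hscale]
  have hnX : n * X₁ + n * X₂ + n * X₃ = n := by linear_combination n * hX
  constructor <;> rintro ⟨h1, h2⟩ <;> constructor <;> linarith

theorem indifferenceLevel_spec {n y z X₂ X₃ : ℝ} (hyz : y + z ≠ 0)
    (hX₂ : n * X₂ - 1 ≠ 0) :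
    n * (y + z) * (indifferenceLevel n (y / (y + z)) X₂ X₃ * X₂ + X₃) =
      (n - 1) * y + (y + z) * indifferenceLevel n (y / (y + z)) X₂ X₃ := by
  unfold indifferenceLevel
  field_simp
  ring

theorem stmt13_general {T : Type*} [Fintype T] [DecidableEq T]
    (n : ℕ) (x : T → ℝ) (hx : ∑ t, x t = 1)
    (hxt : ∀ t : T, 1 < (n : ℝ) * x t ∧ (n : ℝ) * x t < n)
    (y z : ℝ) (hy : 0 < y) (hz : 0 < z)
    (T1 T2 T3 : Finset T) (hT2 : T2.Nonempty)
    (h12 : Disjoint T1 T2) (h13 : Disjoint T1 T3) (h23 : Disjoint T2 T3)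
    (hcover : T1 ∪ T2 ∪ T3 = Finset.univ) :
    (IsSymNash n x y z
        (fun t => if t ∈ T1 then 0
          else if t ∈ T2 then
            (((n : ℝ) - 1) * (y / (y + z)) - (n : ℝ) * ∑ t ∈ T3, x t) /
              ((n : ℝ) * ∑ t ∈ T2, x t - 1)
          else 1) ∧
      0 < (((n : ℝ) - 1) * (y / (y + z)) - (n : ℝ) * ∑ t ∈ T3, x t) /
            ((n : ℝ) * ∑ t ∈ T2, x t - 1) ∧
      (((n : ℝ) - 1) * (y / (y + z)) - (n : ℝ) * ∑ t ∈ T3, x t) /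
            ((n : ℝ) * ∑ t ∈ T2, x t - 1) < 1) ↔
    (∑ t ∈ T3, x t < (1 - 1 / (n : ℝ)) * (y / (y + z)) ∧
     ∑ t ∈ T1, x t < (1 - 1 / (n : ℝ)) * (1 - y / (y + z))) := by
  obtain ⟨t₂, ht₂⟩ := hT2
  have hn : (1 : ℝ) < n := (hxt t₂).1.trans (hxt t₂).2
  have hx_pos (t : T) : 0 < x t :=
    pos_of_mul_pos_right ((hxt t).1.trans' one_pos) (by linarith)
  have hX₂ : 1 < (n : ℝ) * ∑ t ∈ T2, x t :=
    (hxt t₂).1.trans_le <| by gcongr; exact single_le_sum (fun t _ => (hx_pos t).le) ht₂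
  have hX := (sum_univ_eq_add_add_of_partition h12 h13 h23 hcover x).symm.trans hx
  have hyz : 0 < y + z := add_pos hy hz
  refine (and_iff_right_of_imp fun hlevel => ?_).trans
    (indifferenceLevel_pos_and_lt_one_iff (by linarith) hX₂ hX)
  have hcrit := indifferenceLevel_spec (X₃ := ∑ t ∈ T3, x t) hyz.ne' (sub_pos.mpr hX₂).ne'
  rw [← sum_mul_threeLevelStrategy h12 h13 h23 hcover] at hcrit
  exact isSymNash_of_indifference (by exact_mod_cast hn.le) (fun t => (hx_pos t).le) hyz.le
    hlevel.1.le hlevel.2.le (threeLevelStrategy_eq_or T1 T2 _) hcrit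

theorem stmt13 {T : Type*} [Fintype T] [DecidableEq T] (hT : 2 ≤ Fintype.card T)
    (n : ℕ) (x : T → ℝ) (hx : ∑ t, x t = 1)
    (hxt : ∀ t : T, 1 < (n : ℝ) * x t ∧ (n : ℝ) * x t < n)
    (y z : ℝ) (hy : 0 < y) (hz : 0 < z)
    (T1 T2 T3 : Finset T) (hT1 : T1.Nonempty) (hT2 : T2.Nonempty) (hT3 : T3.Nonempty)
    (h12 : Disjoint T1 T2) (h13 : Disjoint T1 T3) (h23 : Disjoint T2 T3)
    (hcover : T1 ∪ T2 ∪ T3 = Finset.univ) :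
    (IsSymNash n x y z
        (fun t => if t ∈ T1 then 0
          else if t ∈ T2 then
            (((n : ℝ) - 1) * (y / (y + z)) - (n : ℝ) * ∑ t ∈ T3, x t) /
              ((n : ℝ) * ∑ t ∈ T2, x t - 1)
          else 1) ∧
      0 < (((n : ℝ) - 1) * (y / (y + z)) - (n : ℝ) * ∑ t ∈ T3, x t) /
            ((n : ℝ) * ∑ t ∈ T2, x t - 1) ∧
      (((n : ℝ) - 1) * (y / (y + z)) - (n : ℝ) * ∑ t ∈ T3, x t) /
            ((n : ℝ) * ∑ t ∈ T2, x t - 1) < 1) ↔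
    (∑ t ∈ T3, x t < (1 - 1 / (n : ℝ)) * (y / (y + z)) ∧
     ∑ t ∈ T1, x t < (1 - 1 / (n : ℝ)) * (1 - y / (y + z))) :=
  stmt13_general n x hx hxt y z hy hz T1 T2 T3 hT2 h12 h13 h23 hcover
end

section
/- Consider a heterogeneous game Γ(n,T,x,y,z) with y > 0 and z > 0. Suppose α* is a symmetric Nash equilibrium taking exactly three distinct values a_1 < a_2 < a_3 on T. Then a_1 = 0, a_3 = 1, 0 < a_2 < 1, and a_2 = ((n−1)·ζ − n·X_3)/(n·X_2 − 1), where X_2 = ∑_{t : α*_t = a_2} x_t and X_3 = ∑_{t : α*_t = a_3} x_t. -/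
open Finset

theorem stmt14 {T : Type*} [Fintype T] (hT : 2 ≤ Fintype.card T)
    (n : ℕ) (x : T → ℝ) (hx : ∑ t, x t = 1)
    (hxt : ∀ t : T, 1 < (n : ℝ) * x t ∧ (n : ℝ) * x t < n)
    (y z : ℝ) (hy : 0 < y) (hz : 0 < z) (α : T → ℝ) (hNE : IsSymNash n x y z α)
    (a1 a2 a3 : ℝ) (h12 : a1 < a2) (h23 : a2 < a3)
    (hval : ∀ t : T, α t = a1 ∨ α t = a2 ∨ α t = a3)
    (h1 : ∃ t : T, α t = a1) (h2 : ∃ t : T, α t = a2) (h3 : ∃ t : T, α t = a3) :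
    a1 = 0 ∧ a3 = 1 ∧ 0 < a2 ∧ a2 < 1 ∧
      a2 = (((n : ℝ) - 1) * (y / (y + z)) -
              (n : ℝ) * ∑ t ∈ Finset.univ.filter (fun t => α t = a3), x t) /
           ((n : ℝ) * ∑ t ∈ Finset.univ.filter (fun t => α t = a2), x t - 1) := by
  classical
  obtain ⟨hstr, hmax⟩ := hNE
  obtain ⟨t1, ht1⟩ := h1
  obtain ⟨t2, ht2⟩ := h2
  obtain ⟨t3, ht3⟩ := h3
  have hyz : 0 < y + z := by linarith
  have hyz' : y + z ≠ 0 := ne_of_gt hyz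
  have hn0 : 0 < (n : ℝ) := by
    by_contra h
    push_neg at h
    have ha := (hxt t1).1
    have hb := (hxt t1).2
    nlinarith
  have hxpos : ∀ t, 0 < x t := by
    intro t
    have ha := (hxt t).1
    nlinarith
  have hn1 : 1 < (n : ℝ) := by
    have ha := (hxt t1).1
    have hb := (hxt t1).2
    have hp := hxpos t1
    nlinarith
  have hn1' : 0 < (n : ℝ) - 1 := by linarith
  -- Key first-order condition
  have key : ∀ t : T, ∀ b : ℝ, 0 ≤ b → b ≤ 1 →
      (x t / ((n : ℝ) - 1)) *
        (((n : ℝ) - 1) * y + (y + z) * α t - (n : ℝ) * (y + z) * ∑ i, x i * α i) *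
        (b - α t) ≤ 0 := by
    intro t b hb0 hb1
    have hβ : IsStrategy (Function.update α t b) := by
      intro s
      rcases eq_or_ne s t with rfl | h
      · simp [hb0, hb1]
      · rw [Function.update_of_ne h]; exact hstr s
    have h := hmax _ hβ
    simp only [U] at h
    have hsum : ∑ j : T, (x j / ((n : ℝ) - 1)) *
          (((n : ℝ) - 1) * y + (y + z) * α j - (n : ℝ) * (y + z) * ∑ i, x i * α i) *
          Function.update α t b j
        - ∑ j : T, (x j / ((n : ℝ) - 1)) *
          (((n : ℝ) - 1) * y + (y + z) * α j - (n : ℝ) * (y + z) * ∑ i, x i * α i) *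
          α j
        = (x t / ((n : ℝ) - 1)) *
          (((n : ℝ) - 1) * y + (y + z) * α t - (n : ℝ) * (y + z) * ∑ i, x i * α i) *
          (b - α t) := by
      rw [← Finset.sum_sub_distrib, Finset.sum_eq_single t]
      · rw [Function.update_self]; ring
      · intro j _ hj
        rw [Function.update_of_ne hj]; ring
      · intro hc; exact absurd (Finset.mem_univ t) hc
    linarith
  have rule1 : ∀ t : T,
      0 < ((n : ℝ) - 1) * y + (y + z) * α t - (n : ℝ) * (y + z) * ∑ i, x i * α i →
      α t = 1 := by
    intro t hg
    have hk := key t 1 zero_le_one le_rfl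
    have hc : 0 < x t / ((n : ℝ) - 1) := div_pos (hxpos t) hn1'
    have hcg := mul_pos hc hg
    have h1' : 1 - α t ≤ 0 := by nlinarith
    have h2' := (hstr t).2
    linarith
  have rule0 : ∀ t : T,
      ((n : ℝ) - 1) * y + (y + z) * α t - (n : ℝ) * (y + z) * ∑ i, x i * α i < 0 →
      α t = 0 := by
    intro t hg
    have hk := key t 0 le_rfl zero_le_one
    have hc : 0 < x t / ((n : ℝ) - 1) := div_pos (hxpos t) hn1'
    have hcg : x t / ((n : ℝ) - 1) *
        (((n : ℝ) - 1) * y + (y + z) * α t - (n : ℝ) * (y + z) * ∑ i, x i * α i) < 0 :=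
      mul_neg_of_pos_of_neg hc hg
    have h1' : α t ≤ 0 := by nlinarith
    have h2' := (hstr t).1
    linarith
  -- the middle value must satisfy the indifference condition
  have hG2 : ((n : ℝ) - 1) * y + (y + z) * a2 - (n : ℝ) * (y + z) * ∑ i, x i * α i = 0 := by
    rcases lt_trichotomy
      (((n : ℝ) - 1) * y + (y + z) * a2 - (n : ℝ) * (y + z) * ∑ i, x i * α i) 0 with h | h | h
    · exfalso
      have e1 : α t1 = 0 := rule0 t1 (by rw [ht1]; nlinarith)
      have e2 : α t2 = 0 := rule0 t2 (by rw [ht2]; exact h)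
      rw [ht1] at e1; rw [ht2] at e2; linarith
    · exact h
    · exfalso
      have e2 : α t2 = 1 := rule1 t2 (by rw [ht2]; exact h)
      have e3 : α t3 = 1 := rule1 t3 (by rw [ht3]; nlinarith)
      rw [ht2] at e2; rw [ht3] at e3; linarith
  have ha1 : a1 = 0 := by
    have e1 : α t1 = 0 := rule0 t1 (by rw [ht1]; nlinarith)
    rw [ht1] at e1; exact e1
  have ha3 : a3 = 1 := by
    have e3 : α t3 = 1 := rule1 t3 (by rw [ht3]; nlinarith)
    rw [ht3] at e3; exact e3
  have ha2pos : 0 < a2 := ha1 ▸ h12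
  have ha2lt : a2 < 1 := ha3 ▸ h23
  -- decompose the sum
  have hSdec : ∑ i, x i * α i =
      a2 * (∑ t ∈ Finset.univ.filter (fun t => α t = a2), x t) +
      ∑ t ∈ Finset.univ.filter (fun t => α t = a3), x t := by
    have hpt : ∀ t : T, x t * α t =
        (if α t = a2 then a2 * x t else 0) + (if α t = a3 then x t else 0) := by
      intro t
      rcases hval t with h | h | h
      · rw [h, if_neg (ne_of_lt h12), if_neg (ne_of_lt (lt_trans h12 h23)), ha1]; ring
      · rw [h, if_pos rfl, if_neg (ne_of_lt h23)]; ring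
      · rw [h, if_neg (ne_of_gt h23), if_pos rfl, ha3]; ring
    rw [Finset.sum_congr rfl fun t _ => hpt t, Finset.sum_add_distrib,
      ← Finset.sum_filter, ← Finset.sum_filter, ← Finset.mul_sum]
  have hX2 : 1 < (n : ℝ) * ∑ t ∈ Finset.univ.filter (fun t => α t = a2), x t := by
    have hmem : t2 ∈ Finset.univ.filter (fun t => α t = a2) :=
      Finset.mem_filter.2 ⟨Finset.mem_univ _, ht2⟩
    have hle : x t2 ≤ ∑ t ∈ Finset.univ.filter (fun t => α t = a2), x t :=
      Finset.single_le_sum (fun t _ => (hxpos t).le) hmem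
    nlinarith [(hxt t2).1]
  rw [hSdec] at hG2
  refine ⟨ha1, ha3, ha2pos, ha2lt, ?_⟩
  have hden : (n : ℝ) * (∑ t ∈ Finset.univ.filter (fun t => α t = a2), x t) - 1 ≠ 0 := by
    linarith
  rw [eq_div_iff hden]
  field_simp
  linear_combination -hG2
end

section
/- Consider a heterogeneous game Γ(n,T,x,y,z) with y + z ≠ 0. If α* is a symmetric Nash equilibrium that is not constant on T (a discriminating equilibrium), then there exists t ∈ T with α*_t = 0 or α*_t = 1; i.e., discriminating equilibrium strategies always include at least one pure action. -/
open Finset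

theorem stmt15 {T : Type*} [Fintype T] (hT : 2 ≤ Fintype.card T)
    (n : ℕ) (x : T → ℝ) (hx : ∑ t, x t = 1)
    (hxt : ∀ t : T, 1 < (n : ℝ) * x t ∧ (n : ℝ) * x t < n)
    (y z : ℝ) (hyz : y + z ≠ 0) (α : T → ℝ) (hNE : IsSymNash n x y z α)
    (hdisc : ¬ ∀ i j : T, α i = α j) :
    ∃ t : T, α t = 0 ∨ α t = 1 := by
  classical
  by_contra hcon
  push_neg at hcon
  obtain ⟨hstr, hmax⟩ := hNE
  have hx0 : ∀ t, 0 < x t := by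
    intro t
    rcases hxt t with ⟨h1, h2⟩
    nlinarith
  have hn1 : (1 : ℝ) < n := by
    have hpos : 0 < Fintype.card T := by omega
    obtain ⟨t⟩ := Fintype.card_pos_iff.mp hpos
    rcases hxt t with ⟨h1, h2⟩
    by_contra hle
    push_neg at hle
    nlinarith [hx0 t]
  set S := ∑ i, x i * α i with hS
  set c : T → ℝ := fun j => (x j / ((n : ℝ) - 1)) *
      (((n : ℝ) - 1) * y + (y + z) * α j - (n : ℝ) * (y + z) * S) with hc
  have hU : ∀ β : T → ℝ, U n x y z β α = z * S + ∑ j, c j * β j := fun β => rfl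
  have hkey : ∀ t : T, c t = 0 := by
    intro t
    have hopen := hstr t
    have h0 : 0 < α t := lt_of_le_of_ne hopen.1 (Ne.symm (hcon t).1)
    have h1 : α t < 1 := lt_of_le_of_ne hopen.2 (hcon t).2
    have hdev : ∀ v : ℝ, 0 ≤ v → v ≤ 1 → c t * v ≤ c t * α t := by
      intro v hv0 hv1
      have hβ : IsStrategy (Function.update α t v) := by
        intro s
        rcases eq_or_ne s t with rfl | hne
        · simp [hv0, hv1]
        · rw [Function.update_of_ne hne]; exact hstr s
      have hle := hmax _ hβ
      rw [hU, hU] at hle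
      have hsum1 : ∑ j, c j * Function.update α t v j
          = c t * v + ∑ j ∈ univ.erase t, c j * α j := by
        rw [← Finset.add_sum_erase _ _ (mem_univ t)]
        simp only [Function.update_self]
        congr 1
        refine Finset.sum_congr rfl fun j hj => ?_
        rw [Function.update_of_ne (Finset.ne_of_mem_erase hj)]
      have hsum2 : (∑ j, c j * α j)
          = c t * α t + ∑ j ∈ univ.erase t, c j * α j := by
        rw [← Finset.add_sum_erase _ _ (mem_univ t)]
      rw [hsum1, hsum2] at hle
      linarith
    have hle1 := hdev 1 zero_le_one le_rfl
    have hle0 := hdev 0 le_rfl zero_le_one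
    rcases lt_trichotomy (c t) 0 with h | h | h
    · nlinarith
    · exact h
    · nlinarith
  have hlin : ∀ t, (y + z) * α t = (n : ℝ) * (y + z) * S - ((n : ℝ) - 1) * y := by
    intro t
    have h := hkey t
    have hxne : x t / ((n : ℝ) - 1) ≠ 0 :=
      ne_of_gt (div_pos (hx0 t) (by linarith))
    rw [hc] at h
    simp only [mul_eq_zero] at h
    rcases h with h | h
    · exact absurd h hxne
    · linarith
  exact hdisc fun i j => mul_left_cancel₀ hyz (by rw [hlin i, hlin j])
end

section
/- Consider a heterogeneous game Γ(n,T,x,y,z) with y > 0 and z > 0. If α* is a symmetric Nash equilibrium taking exactly two distinct values a_1 < a_2 on T, then a_1 = 0 or a_2 = 1. -/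
open Finset

theorem stmt16 {T : Type*} [Fintype T] (hT : 2 ≤ Fintype.card T)
    (n : ℕ) (x : T → ℝ) (hx : ∑ t, x t = 1)
    (hxt : ∀ t : T, 1 < (n : ℝ) * x t ∧ (n : ℝ) * x t < n)
    (y z : ℝ) (hy : 0 < y) (hz : 0 < z) (α : T → ℝ) (hNE : IsSymNash n x y z α)
    (a1 a2 : ℝ) (h12 : a1 < a2)
    (hval : ∀ t : T, α t = a1 ∨ α t = a2)
    (h1 : ∃ t : T, α t = a1) (h2 : ∃ t : T, α t = a2) :
    a1 = 0 ∨ a2 = 1 := by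
  classical
  by_contra hcon
  push_neg at hcon
  obtain ⟨ha1, ha2⟩ := hcon
  obtain ⟨hstrat, hnash⟩ := hNE
  obtain ⟨t1, ht1⟩ := h1
  obtain ⟨t2, ht2⟩ := h2
  have hn1 : (1 : ℝ) < n := lt_trans (hxt t1).1 (hxt t1).2
  have hn1' : (0 : ℝ) < (n : ℝ) - 1 := by linarith
  have hxpos : ∀ t, 0 < x t := by
    intro t
    have h := (hxt t).1
    nlinarith
  have ha1pos : 0 < a1 := lt_of_le_of_ne (ht1 ▸ (hstrat t1).1) (Ne.symm ha1)
  have ha2lt : a2 < 1 := lt_of_le_of_ne (ht2 ▸ (hstrat t2).2) ha2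
  have hint : ∀ t, 0 < α t ∧ α t < 1 := by
    intro t
    rcases hval t with h | h <;> rw [h] <;> constructor <;> linarith
  set D : T → ℝ := fun i =>
    (x i / ((n : ℝ) - 1)) *
      (((n : ℝ) - 1) * y + (y + z) * α i - (n : ℝ) * (y + z) * ∑ i, x i * α i) with hD
  have hdiff : ∀ (j : T) (v : ℝ),
      U n x y z (Function.update α j v) α - U n x y z α α = D j * (v - α j) := by
    intro j v
    simp only [U]
    have hs : (∑ i, (x i / ((n : ℝ) - 1)) *
          (((n : ℝ) - 1) * y + (y + z) * α i - (n : ℝ) * (y + z) * ∑ i, x i * α i) *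
          Function.update α j v i)
        - ∑ i, (x i / ((n : ℝ) - 1)) *
          (((n : ℝ) - 1) * y + (y + z) * α i - (n : ℝ) * (y + z) * ∑ i, x i * α i) *
          α i = D j * (v - α j) := by
      rw [← Finset.sum_sub_distrib, Finset.sum_eq_single j]
      · simp [hD, Function.update_self, mul_sub]
      · intro b _ hb
        simp [Function.update_of_ne hb]
      · simp
    linarith
  have hDzero : ∀ j, D j = 0 := by
    intro j
    have hup : ∀ v : ℝ, 0 ≤ v → v ≤ 1 → IsStrategy (Function.update α j v) := by
      intro v hv0 hv1 t
      by_cases ht : t = j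
      · subst ht; simp [Function.update_self]; exact ⟨hv0, hv1⟩
      · simp [Function.update_of_ne ht]; exact hstrat t
    have h0 : D j * (0 - α j) ≤ 0 := by
      have := hnash _ (hup 0 le_rfl zero_le_one)
      have hd := hdiff j 0
      linarith
    have h1' : D j * (1 - α j) ≤ 0 := by
      have := hnash _ (hup 1 zero_le_one le_rfl)
      have hd := hdiff j 1
      linarith
    obtain ⟨hj0, hj1⟩ := hint j
    by_contra hne
    rcases lt_or_gt_of_ne hne with hlt | hgt
    · nlinarith
    · nlinarith
  have hK : ∀ j, ((n : ℝ) - 1) * y + (y + z) * α j - (n : ℝ) * (y + z) * ∑ i, x i * α i = 0 := by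
    intro j
    have := hDzero j
    rw [hD] at this
    have hxne : x j / ((n : ℝ) - 1) ≠ 0 := ne_of_gt (div_pos (hxpos j) hn1')
    simpa [hxne] using mul_eq_zero.mp this
  have hk1 := hK t1
  have hk2 := hK t2
  rw [ht1] at hk1
  rw [ht2] at hk2
  nlinarith
end

section
/- Consider a heterogeneous game Γ(n,T,x,y,z) with y > 0 and z > 0. Suppose α* is a symmetric Nash equilibrium taking exactly two distinct values a_1 < a_2 on T, with T_1 = {t : α*_t = a_1}, T_2 = {t : α*_t = a_2}, X_1 = ∑_{t∈T_1} x_t, X_2 = ∑_{t∈T_2} x_t. If a_2 = 1 and 0 < a_1 < 1, then a_1 = ((n−1)·ζ − n·X_2)/(n·X_1 − 1) and X_2 < (1 − 1/n)·ζ; if a_1 = 0 and 0 < a_2 < 1, then a_2 = (n−1)·ζ/(n·X_2 − 1) and X_2 > (1 − 1/n)·ζ + 1/n. -/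
open Finset

/-!
Against opponents playing `α`, the payoff `U · α` is affine in the player's own strategy, the
coefficient of `β t` being `x t / (n - 1)` times `coopGain n x y z α t`. At an equilibrium this
coefficient must vanish for every type `t` at which `α t` is strictly mixed. With two values
`a₁ < a₂` the sum `∑ x i α i` equals `X₁ a₁ + X₂ a₂`, so the vanishing of the coefficient at the
mixed value is a linear equation for it; solving it gives the formulas, and the constraint that
the mixed value lies in `(0, 1)` gives the bounds on `X₂`.
-/

section Game

variable {T : Type*} [Fintype T] (n : ℕ) (x : T → ℝ) (y z : ℝ)

noncomputable def coopGain (α : T → ℝ) (j : T) : ℝ :=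
  ((n : ℝ) - 1) * y + (y + z) * α j - (n : ℝ) * (y + z) * ∑ i, x i * α i

lemma U_sub_U (α β : T → ℝ) :
    U n x y z β α - U n x y z α α =
      ∑ j, x j / ((n : ℝ) - 1) * coopGain n x y z α j * (β j - α j) := by
  simp only [U, coopGain]
  rw [add_sub_add_left_eq_sub, ← sum_sub_distrib]
  exact sum_congr rfl fun j _ => by ring

variable {n x y z}

lemma IsSymNash.mul_coopGain_mul_sub_nonpos {α : T → ℝ} (hNE : IsSymNash n x y z α) (t : T)
    {v : ℝ} (hv : v ∈ Set.Icc (0 : ℝ) 1) :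
    x t / ((n : ℝ) - 1) * coopGain n x y z α t * (v - α t) ≤ 0 := by
  classical
  have hβ : IsStrategy (Function.update α t v) := by
    intro s
    rcases eq_or_ne s t with rfl | hs
    · simpa using hv
    · simpa [Function.update_of_ne hs] using hNE.1 s
  have hdiff := U_sub_U n x y z α (Function.update α t v)
  rw [Fintype.sum_eq_single t fun j hj => by simp [Function.update_of_ne hj],
    Function.update_self] at hdiff
  linarith [hNE.2 _ hβ]

end Game

lemma eq_zero_of_forall_mul_sub_nonpos {c a : ℝ} (ha : a ∈ Set.Ioo (0 : ℝ) 1)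
    (h : ∀ v ∈ Set.Icc (0 : ℝ) 1, c * (v - a) ≤ 0) : c = 0 := by
  have h0 := h 0 ⟨le_rfl, zero_le_one⟩
  have h1 := h 1 ⟨zero_le_one, le_rfl⟩
  nlinarith [ha.1, ha.2]

lemma IsSymNash.coopGain_eq_zero {T : Type*} [Fintype T] {n : ℕ} {x : T → ℝ} {y z : ℝ}
    {α : T → ℝ} (hNE : IsSymNash n x y z α) (hn : (n : ℝ) ≠ 1) {t : T} (hx : x t ≠ 0)
    (ht : α t ∈ Set.Ioo (0 : ℝ) 1) : coopGain n x y z α t = 0 := by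
  have hc := eq_zero_of_forall_mul_sub_nonpos ht fun v hv =>
    hNE.mul_coopGain_mul_sub_nonpos t hv
  exact (mul_eq_zero.mp hc).resolve_left (div_ne_zero hx (sub_ne_zero.mpr hn))

lemma sum_mul_eq_of_forall_eq_or_eq {T R : Type*} [Fintype T] [CommSemiring R] [DecidableEq R]
    (x α : T → R) {a b : R} (hab : a ≠ b) (h : ∀ t, α t = a ∨ α t = b) :
    ∑ t, x t * α t =
      (∑ t ∈ univ.filter (fun t => α t = a), x t) * a +
        (∑ t ∈ univ.filter (fun t => α t = b), x t) * b := by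
  simp only [sum_filter, sum_mul, ← sum_add_distrib]
  refine sum_congr rfl fun t _ => ?_
  rcases h t with ht | ht <;> simp [ht, hab, hab.symm]

lemma one_lt_mul_sum_of_mem {T : Type*} {s : Finset T} {x : T → ℝ} {n : ℝ} (hn : 0 ≤ n)
    (hx : ∀ t ∈ s, 0 ≤ x t) {t : T} (ht : t ∈ s) (h : 1 < n * x t) : 1 < n * ∑ i ∈ s, x i :=
  h.trans_le (mul_le_mul_of_nonneg_left (single_le_sum hx ht) hn)

lemma indifference_solution_of_top_eq_one {n y z X₁ X₂ a : ℝ} (hn : 0 < n) (hyz : 0 < y + z)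
    (hX₁ : 1 < n * X₁) (ha : 0 < a)
    (h : (n - 1) * y + (y + z) * a - n * (y + z) * (X₁ * a + X₂ * 1) = 0) :
    a = ((n - 1) * (y / (y + z)) - n * X₂) / (n * X₁ - 1) ∧
      X₂ < (1 - 1 / n) * (y / (y + z)) := by
  have key : a * (n * X₁ - 1) * (y + z) = (n - 1) * y - n * X₂ * (y + z) := by
    linear_combination -h
  refine ⟨?_, ?_⟩
  · rw [eq_div_iff (by linarith)]
    field_simp
    linear_combination key
  · have hpos : 0 < a * (n * X₁ - 1) * (y + z) := by
      have := sub_pos.mpr hX₁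
      positivity
    rw [show (1 - 1 / n) * (y / (y + z)) = ((n - 1) * y) / (n * (y + z)) by field_simp,
      lt_div_iff₀ (by positivity)]
    linarith

lemma indifference_solution_of_bottom_eq_zero {n y z X₁ X₂ a : ℝ} (hn : 0 < n)
    (hyz : 0 < y + z) (hX₂ : 1 < n * X₂) (ha : a < 1)
    (h : (n - 1) * y + (y + z) * a - n * (y + z) * (X₁ * 0 + X₂ * a) = 0) :
    a = (n - 1) * (y / (y + z)) / (n * X₂ - 1) ∧
      (1 - 1 / n) * (y / (y + z)) + 1 / n < X₂ := by
  have key : a * (n * X₂ - 1) * (y + z) = (n - 1) * y := by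
    linear_combination -h
  refine ⟨?_, ?_⟩
  · rw [eq_div_iff (by linarith)]
    field_simp
    linear_combination key
  · have hD : 0 < (n * X₂ - 1) * (y + z) := mul_pos (by linarith) hyz
    rw [show (1 - 1 / n) * (y / (y + z)) + 1 / n = ((n - 1) * y + (y + z)) / (n * (y + z)) by
      field_simp, div_lt_iff₀ (by positivity)]
    nlinarith [mul_lt_mul_of_pos_right ha hD]

theorem stmt17_general {T : Type*} [Fintype T]
    (n : ℕ) (x : T → ℝ)
    (hxt : ∀ t : T, 1 < (n : ℝ) * x t ∧ (n : ℝ) * x t < n)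
    (y z : ℝ) (hy : 0 < y) (hz : 0 < z) (α : T → ℝ) (hNE : IsSymNash n x y z α)
    (a1 a2 : ℝ) (h12 : a1 < a2)
    (hval : ∀ t : T, α t = a1 ∨ α t = a2)
    (h1 : ∃ t : T, α t = a1) (h2 : ∃ t : T, α t = a2) :
    ((a2 = 1 ∧ 0 < a1 ∧ a1 < 1) →
        a1 = (((n : ℝ) - 1) * (y / (y + z)) -
                (n : ℝ) * ∑ t ∈ Finset.univ.filter (fun t => α t = a2), x t) /
             ((n : ℝ) * ∑ t ∈ Finset.univ.filter (fun t => α t = a1), x t - 1) ∧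
        ∑ t ∈ Finset.univ.filter (fun t => α t = a2), x t <
          (1 - 1 / (n : ℝ)) * (y / (y + z))) ∧
    ((a1 = 0 ∧ 0 < a2 ∧ a2 < 1) →
        a2 = ((n : ℝ) - 1) * (y / (y + z)) /
             ((n : ℝ) * ∑ t ∈ Finset.univ.filter (fun t => α t = a2), x t - 1) ∧
        (1 - 1 / (n : ℝ)) * (y / (y + z)) + 1 / (n : ℝ) <
          ∑ t ∈ Finset.univ.filter (fun t => α t = a2), x t) := by
  obtain ⟨t₁, ht₁⟩ := h1
  obtain ⟨t₂, ht₂⟩ := h2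
  have hn : (1 : ℝ) < n := (hxt t₁).1.trans (hxt t₁).2
  have hx : ∀ t, 0 < x t := fun t => pos_of_mul_pos_right ((hxt t).1.trans' one_pos) n.cast_nonneg
  have hyz : 0 < y + z := add_pos hy hz
  have hX : ∀ {a} {t}, α t = a → 1 < (n : ℝ) * ∑ i ∈ univ.filter (fun i => α i = a), x i :=
    fun ht => one_lt_mul_sum_of_mem n.cast_nonneg (fun i _ => (hx i).le)
      (mem_filter.mpr ⟨mem_univ _, ht⟩) (hxt _).1
  have hgain : ∀ {t}, α t ∈ Set.Ioo (0 : ℝ) 1 → _ := fun ht => by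
    have h := hNE.coopGain_eq_zero hn.ne' (hx _).ne' ht
    rwa [coopGain, sum_mul_eq_of_forall_eq_or_eq x α h12.ne hval] at h
  refine ⟨fun ⟨ha₂, ha₁⟩ => ?_, fun ⟨ha₁, ha₂⟩ => ?_⟩
  · subst ha₂
    have h := hgain (t := t₁) (ht₁ ▸ ha₁)
    rw [ht₁] at h
    exact indifference_solution_of_top_eq_one (by linarith) hyz (hX ht₁) ha₁.1 h
  · subst ha₁
    have h := hgain (t := t₂) (ht₂ ▸ ha₂)
    rw [ht₂] at h
    exact indifference_solution_of_bottom_eq_zero (by linarith) hyz (hX ht₂) ha₂.2 h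

theorem stmt17 {T : Type*} [Fintype T] (hT : 2 ≤ Fintype.card T)
    (n : ℕ) (x : T → ℝ) (hx : ∑ t, x t = 1)
    (hxt : ∀ t : T, 1 < (n : ℝ) * x t ∧ (n : ℝ) * x t < n)
    (y z : ℝ) (hy : 0 < y) (hz : 0 < z) (α : T → ℝ) (hNE : IsSymNash n x y z α)
    (a1 a2 : ℝ) (h12 : a1 < a2)
    (hval : ∀ t : T, α t = a1 ∨ α t = a2)
    (h1 : ∃ t : T, α t = a1) (h2 : ∃ t : T, α t = a2) :
    ((a2 = 1 ∧ 0 < a1 ∧ a1 < 1) →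
        a1 = (((n : ℝ) - 1) * (y / (y + z)) -
                (n : ℝ) * ∑ t ∈ Finset.univ.filter (fun t => α t = a2), x t) /
             ((n : ℝ) * ∑ t ∈ Finset.univ.filter (fun t => α t = a1), x t - 1) ∧
        ∑ t ∈ Finset.univ.filter (fun t => α t = a2), x t <
          (1 - 1 / (n : ℝ)) * (y / (y + z))) ∧
    ((a1 = 0 ∧ 0 < a2 ∧ a2 < 1) →
        a2 = ((n : ℝ) - 1) * (y / (y + z)) /
             ((n : ℝ) * ∑ t ∈ Finset.univ.filter (fun t => α t = a2), x t - 1) ∧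
        (1 - 1 / (n : ℝ)) * (y / (y + z)) + 1 / (n : ℝ) <
          ∑ t ∈ Finset.univ.filter (fun t => α t = a2), x t) :=
  stmt17_general n x hxt y z hy hz α hNE a1 a2 h12 hval h1 h2
end
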